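/- arXiv:1101.1108 — 8 statements merged into one kernel-verified Lean document; each statement's English description precedes it below -/
import Mathlib

section
/- For every n ≥ 1, the Eulerian-Catalan number EC(n) := A(n,2n+1)/(n+1) satisfies EC(n) = 2·A(n,2n), where A(m,N) is the number of permutations of [N] with m descents. In particular (n+1) divides A(n,2n+1). -/
open scoped Classical

/-- Number of descents of `w` occurring among the first `ℓ` positions
(0-indexed: position `i` is a descent if `w i > w (i+1)`). -/
noncomputable def descentsIn {N : ℕ} (w : Equiv.Perm (Fin N)) (ℓ : ℕ) : ℕ :=
  ((Finset.range ℓ).filter (fun i =>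
    ∃ h : i + 1 < N, w ⟨i + 1, h⟩ < w ⟨i, Nat.lt_of_succ_lt h⟩)).card

/-- Total number of descents of a permutation of `[N]`. -/
noncomputable def descents {N : ℕ} (w : Equiv.Perm (Fin N)) : ℕ :=
  descentsIn w (N - 1)

/-- The Eulerian number `A(m, N)`: the number of permutations of `[N]`
with exactly `m` descents. -/
noncomputable def eulerian (m N : ℕ) : ℕ :=
  (Finset.univ.filter (fun w : Equiv.Perm (Fin N) => descents w = m)).card

/-!
Inserting the letter `N` into a permutation word of length `N` with `d` descents keeps `d`
descents when it goes at the end or directly after a descent (`d + 1` positions), and creates one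
more descent at each of the other `N - d` positions. Since every permutation of `[N + 1]` arises
exactly once this way, `A(m+1, N+1) = (m+2) A(m+1, N) + (N-m) A(m, N)`. Complementing the values
turns `d` descents into `N - 1 - d`, so `A(n-1, 2n) = A(n, 2n)`, and the recurrence at `N = 2n`
reads `A(n, 2n+1) = (n+1) (A(n, 2n) + A(n-1, 2n)) = 2 (n+1) A(n, 2n)`.
-/

open Finset

namespace Eulerian

variable {α β : Type*} {N : ℕ}

section insertNth

theorem insertNth_apply_of_lt (k : Fin (N + 1)) (x : α) (f : Fin N → α) {i : ℕ} (hi : i < N)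
    (hik : i < k) (h : i < N + 1) :
    (Fin.insertNth k x f : Fin (N + 1) → α) ⟨i, h⟩ = f ⟨i, hi⟩ := by
  rw [show (⟨i, h⟩ : Fin (N + 1)) = k.succAbove ⟨i, hi⟩ from
    (Fin.succAbove_of_castSucc_lt k ⟨i, hi⟩ hik).symm, Fin.insertNth_apply_succAbove]

theorem insertNth_apply_succ_of_le (k : Fin (N + 1)) (x : α) (f : Fin N → α) {i : ℕ}
    (hi : i < N) (hki : k ≤ i) (h : i + 1 < N + 1) :
    (Fin.insertNth k x f : Fin (N + 1) → α) ⟨i + 1, h⟩ = f ⟨i, hi⟩ := by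
  rw [show (⟨i + 1, h⟩ : Fin (N + 1)) = k.succAbove ⟨i, hi⟩ from
    (Fin.succAbove_of_le_castSucc k ⟨i, hi⟩ hki).symm, Fin.insertNth_apply_succAbove]

theorem insertNth_apply_of_eq (k : Fin (N + 1)) (x : α) (f : Fin N → α) {i : ℕ} (hik : i = k)
    (h : i < N + 1) : (Fin.insertNth k x f : Fin (N + 1) → α) ⟨i, h⟩ = x := by
  rw [show (⟨i, h⟩ : Fin (N + 1)) = k from Fin.ext hik, Fin.insertNth_apply_same]

end insertNth

variable [LinearOrder α] [LinearOrder β]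

noncomputable def descentSet (f : Fin N → α) : Finset ℕ :=
  (range (N - 1)).filter fun i =>
    ∃ h : i + 1 < N, f ⟨i + 1, h⟩ < f ⟨i, Nat.lt_of_succ_lt h⟩

theorem descents_eq_card_descentSet (w : Equiv.Perm (Fin N)) :
    descents w = #(descentSet w) := rfl

theorem mem_descentSet {f : Fin N → α} {i : ℕ} (hi : i + 1 < N) :
    i ∈ descentSet f ↔ f ⟨i + 1, hi⟩ < f ⟨i, Nat.lt_of_succ_lt hi⟩ := by
  simp only [descentSet, mem_filter, mem_range]
  exact ⟨fun ⟨_, _, h⟩ => h, fun h => ⟨by omega, hi, h⟩⟩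

theorem succ_lt_of_mem_descentSet {f : Fin N → α} {i : ℕ} (h : i ∈ descentSet f) :
    i + 1 < N := by
  simp only [descentSet, mem_filter, mem_range] at h
  omega

theorem descentSet_subset_range (f : Fin N → α) : descentSet f ⊆ range (N - 1) :=
  filter_subset _ _

theorem descents_le (w : Equiv.Perm (Fin N)) : descents w ≤ N - 1 :=
  (card_le_card (descentSet_subset_range w)).trans_eq (card_range _)

theorem descentSet_comp_of_strictMono {g : α → β} (hg : StrictMono g) (f : Fin N → α) :
    descentSet (g ∘ f) = descentSet f := by
  ext i
  simp only [descentSet, mem_filter, Function.comp_apply, hg.lt_iff_lt]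

theorem descentSet_comp_of_strictAnti {g : α → β} (hg : StrictAnti g) {f : Fin N → α}
    (hf : f.Injective) : descentSet (g ∘ f) = range (N - 1) \ descentSet f := by
  ext i
  simp only [mem_sdiff, mem_range]
  constructor
  · intro h
    have hi := succ_lt_of_mem_descentSet h
    rw [mem_descentSet hi, Function.comp_apply, Function.comp_apply, hg.lt_iff_gt] at h
    exact ⟨by omega, fun h' => (mem_descentSet hi).1 h' |>.asymm h⟩
  · rintro ⟨hi, h⟩
    have hi : i + 1 < N := by omega
    rw [mem_descentSet hi] at h ⊢
    refine hg (lt_of_le_of_ne (not_lt.1 h) fun he => ?_)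
    simpa using hf he

theorem descents_trans_revPerm (w : Equiv.Perm (Fin N)) :
    descents (w.trans Fin.revPerm) = N - 1 - descents w := by
  rw [descents_eq_card_descentSet, descents_eq_card_descentSet, ← card_range (N - 1),
    ← card_sdiff_of_subset (descentSet_subset_range _)]
  exact congrArg card (descentSet_comp_of_strictAnti Fin.rev_strictAnti w.injective)

theorem eulerian_symm (m : ℕ) (hm : m ≤ N - 1) :
    eulerian (N - 1 - m) N = eulerian m N := by
  refine card_equiv (Equiv.mulLeft Fin.revPerm) fun w => ?_
  simp only [mem_filter, mem_univ, true_and, Equiv.coe_mulLeft, Equiv.Perm.mul_def,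
    descents_trans_revPerm]
  have := descents_le w
  omega

section insertion

/-- `N` is included as if the word ended with a descent to `-∞`. -/
noncomputable def descentBottoms (f : Fin N → α) : Finset ℕ :=
  insert N ((descentSet f).image (· + 1))

theorem card_descentBottoms (f : Fin N → α) : #(descentBottoms f) = #(descentSet f) + 1 := by
  rw [descentBottoms, card_insert_of_notMem, card_image_of_injective _ (add_left_injective 1)]
  intro h
  obtain ⟨j, hj, hjN⟩ := mem_image.1 h
  have := succ_lt_of_mem_descentSet hj
  omega

theorem descentBottoms_subset_range (f : Fin N → α) : descentBottoms f ⊆ range (N + 1) := by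
  intro i h
  rw [descentBottoms, mem_insert, mem_image] at h
  rw [mem_range]
  obtain rfl | ⟨j, hj, rfl⟩ := h
  · omega
  · have := succ_lt_of_mem_descentSet hj
    omega

variable {f : Fin N → α} {x : α}

theorem mem_descentSet_insertNth_iff (hx : ∀ j, f j < x) (k : Fin (N + 1)) {i : ℕ}
    (hi : i < N) :
    i ∈ descentSet (Fin.insertNth k x f) ↔
      i = k ∨ (i + 1 < k ∧ i ∈ descentSet f) ∨ (k < i ∧ i - 1 ∈ descentSet f) := by
  rw [mem_descentSet (by omega)]
  rcases lt_trichotomy (i + 1) k with hlt | heq | hgt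
  · rw [insertNth_apply_of_lt k x f (by omega) hlt, insertNth_apply_of_lt k x f hi (by omega),
      ← mem_descentSet]
    grind
  · rw [insertNth_apply_of_eq k x f heq, insertNth_apply_of_lt k x f hi (by omega)]
    simp only [(hx _).not_gt, false_iff]
    omega
  · obtain rfl | hki := eq_or_lt_of_le (Nat.le_of_lt_succ hgt)
    · simp only [insertNth_apply_succ_of_le k x f hi le_rfl, insertNth_apply_of_eq k x f rfl, hx,
        true_or]
    obtain ⟨j, rfl⟩ : ∃ j, i = j + 1 := ⟨i - 1, by omega⟩
    rw [insertNth_apply_succ_of_le k x f hi (by omega),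
      insertNth_apply_succ_of_le k x f (by omega) (by omega), ← mem_descentSet hi]
    simp only [Nat.add_sub_cancel]
    grind

theorem descentSet_insertNth (hx : ∀ j, f j < x) (k : Fin (N + 1)) :
    descentSet (Fin.insertNth k x f) =
      ((descentSet f).filter (fun j : ℕ => j + 1 ≠ k)).image
          (fun j : ℕ => if j < k then j else j + 1) ∪
        (range N).filter (fun i : ℕ => i = k) := by
  ext i
  simp only [mem_union, mem_image, mem_filter, mem_range]
  by_cases hi : i < N
  · rw [mem_descentSet_insertNth_iff hx k hi]
    constructor
    · rintro (rfl | ⟨hik, hS⟩ | ⟨hki, hS⟩)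
      · exact .inr ⟨hi, rfl⟩
      · exact .inl ⟨i, ⟨hS, by omega⟩, if_pos (by omega)⟩
      · exact .inl ⟨i - 1, ⟨hS, by omega⟩, by rw [if_neg (by omega)]; omega⟩
    · rintro (⟨j, ⟨hS, hjk⟩, rfl⟩ | ⟨-, rfl⟩)
      · split_ifs with hjk'
        · exact .inr (.inl ⟨by omega, hS⟩)
        · exact .inr (.inr ⟨by omega, by simpa using hS⟩)
      · exact .inl rfl
  · refine iff_of_false (fun h => hi ?_) ?_
    · have := succ_lt_of_mem_descentSet h
      omega
    · rintro (⟨j, ⟨hS, -⟩, rfl⟩ | ⟨h, -⟩)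
      · have := succ_lt_of_mem_descentSet hS
        split_ifs at hi <;> omega
      · exact hi h

theorem card_descentSet_insertNth_eq_card_filter_add (hx : ∀ j, f j < x) (k : Fin (N + 1)) :
    #(descentSet (Fin.insertNth k x f)) =
      #((descentSet f).filter (fun j : ℕ => j + 1 ≠ k)) + if (k : ℕ) < N then 1 else 0 := by
  rw [descentSet_insertNth hx, card_union_of_disjoint, card_image_of_injective, filter_eq',
    apply_ite card, card_singleton, card_empty]
  · simp only [mem_range]
  · intro a b hab
    dsimp only at hab
    split_ifs at hab <;> omega
  · refine disjoint_left.2 fun i hi hk => ?_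
    obtain ⟨j, -, rfl⟩ := mem_image.1 hi
    have := (mem_filter.1 hk).2
    split_ifs at this <;> omega

theorem card_descentSet_insertNth (hx : ∀ j, f j < x) (k : Fin (N + 1)) :
    #(descentSet (Fin.insertNth k x f)) =
      #(descentSet f) + if (k : ℕ) ∈ descentBottoms f then 0 else 1 := by
  rw [card_descentSet_insertNth_eq_card_filter_add hx, descentBottoms]
  simp only [mem_insert, mem_image]
  by_cases hkN : (k : ℕ) = N
  · rw [filter_true_of_mem fun j hj => ?_, if_neg hkN.not_lt, if_pos (.inl hkN)]
    have := succ_lt_of_mem_descentSet hj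
    omega
  obtain ⟨j, hj, hjk⟩ | hk := em (∃ j ∈ descentSet f, j + 1 = k)
  · rw [if_pos (by omega), if_pos (.inr ⟨j, hj, hjk⟩), ← hjk]
    simp only [ne_eq, add_left_inj, filter_ne', card_erase_of_mem hj]
    have := card_pos.2 ⟨j, hj⟩
    omega
  · rw [filter_true_of_mem fun j hj => show j + 1 ≠ (k : ℕ) from (hk ⟨j, hj, ·⟩),
      if_pos (by omega), if_neg fun h => h.elim hkN hk]

theorem card_filter_val_mem_descentBottoms (f : Fin N → α) :
    #{k : Fin (N + 1) | (k : ℕ) ∈ descentBottoms f} = #(descentSet f) + 1 := by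
  have hB : ∀ i ∈ descentBottoms f, i < N + 1 := fun i hi =>
    mem_range.1 (descentBottoms_subset_range f hi)
  rw [← card_descentBottoms, ← card_attachFin _ hB]
  congr 1
  ext k
  simp

theorem card_filter_card_descentSet_insertNth_eq (hx : ∀ j, f j < x) :
    #{k : Fin (N + 1) | #(descentSet (Fin.insertNth k x f)) = #(descentSet f)} =
      #(descentSet f) + 1 := by
  simp only [card_descentSet_insertNth hx, Nat.add_eq_left, ite_eq_left_iff, one_ne_zero,
    imp_false, not_not]
  exact card_filter_val_mem_descentBottoms f

theorem card_filter_card_descentSet_insertNth_eq_add_one (hx : ∀ j, f j < x) :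
    #{k : Fin (N + 1) | #(descentSet (Fin.insertNth k x f)) = #(descentSet f) + 1} =
      N - #(descentSet f) := by
  simp only [card_descentSet_insertNth hx, add_right_inj, ite_eq_right_iff, zero_ne_one,
    imp_false]
  have := card_filter_add_card_filter_not (s := univ) fun k : Fin (N + 1) =>
    (k : ℕ) ∈ descentBottoms f
  rw [card_filter_val_mem_descentBottoms, card_univ, Fintype.card_fin] at this
  omega

end insertion

section insertMax

open Equiv

noncomputable def insertMax (v : Perm (Fin N)) (k : Fin (N + 1)) : Perm (Fin (N + 1)) :=
  (finSuccEquiv' k).trans (v.optionCongr.trans finSuccEquivLast.symm)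

theorem insertMax_apply_self (v : Perm (Fin N)) (k : Fin (N + 1)) :
    insertMax v k k = Fin.last N := by
  simp [insertMax, finSuccEquiv'_at]

theorem insertMax_apply_succAbove (v : Perm (Fin N)) (k : Fin (N + 1)) (j : Fin N) :
    insertMax v k (k.succAbove j) = (v j).castSucc := by
  simp [insertMax, finSuccEquiv'_succAbove]

theorem coe_insertMax (v : Perm (Fin N)) (k : Fin (N + 1)) :
    ⇑(insertMax v k) = Fin.insertNth k (Fin.last N) (Fin.castSucc ∘ v) := by
  funext i
  obtain rfl | ⟨j, rfl⟩ := Fin.eq_self_or_eq_succAbove k i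
  · rw [insertMax_apply_self, Fin.insertNth_apply_same]
  · rw [insertMax_apply_succAbove, Fin.insertNth_apply_succAbove, Function.comp_apply]

theorem insertMax_bijective :
    Function.Bijective fun p : Perm (Fin N) × Fin (N + 1) => insertMax p.1 p.2 := by
  refine (Fintype.bijective_iff_injective_and_card _).2 ⟨?_, ?_⟩
  · rintro ⟨v, k⟩ ⟨v', k'⟩ h
    dsimp only at h
    obtain rfl : k = k' := (insertMax v k).injective <| by
      rw [insertMax_apply_self, h, insertMax_apply_self]
    refine Prod.ext (Equiv.ext fun j => ?_) rfl
    simpa [insertMax_apply_succAbove] using DFunLike.congr_fun h (k.succAbove j)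
  · simp [Fintype.card_perm, Nat.factorial_succ, mul_comm]

theorem descents_insertMax (v : Perm (Fin N)) (k : Fin (N + 1)) :
    descents (insertMax v k) =
      #(descentSet (Fin.insertNth k (Fin.last N) (Fin.castSucc ∘ v))) := by
  rw [descents_eq_card_descentSet, coe_insertMax]

theorem card_descentSet_castSucc_comp (v : Perm (Fin N)) :
    #(descentSet (Fin.castSucc ∘ v)) = descents v := by
  rw [descentSet_comp_of_strictMono Fin.strictMono_castSucc, descents_eq_card_descentSet]

theorem descents_insertMax_eq_or (v : Perm (Fin N)) (k : Fin (N + 1)) :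
    descents (insertMax v k) = descents v ∨ descents (insertMax v k) = descents v + 1 := by
  rw [descents_insertMax,
    card_descentSet_insertNth (f := Fin.castSucc ∘ v) fun j => Fin.castSucc_lt_last _,
    card_descentSet_castSucc_comp]
  split_ifs <;> simp

theorem card_filter_descents_insertMax_eq (v : Perm (Fin N)) :
    #{k | descents (insertMax v k) = descents v} = descents v + 1 := by
  simp only [descents_insertMax, ← card_descentSet_castSucc_comp v]
  exact card_filter_card_descentSet_insertNth_eq fun j => Fin.castSucc_lt_last _

theorem card_filter_descents_insertMax_eq_add_one (v : Perm (Fin N)) :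
    #{k | descents (insertMax v k) = descents v + 1} = N - descents v := by
  simp only [descents_insertMax, ← card_descentSet_castSucc_comp v]
  exact card_filter_card_descentSet_insertNth_eq_add_one fun j => Fin.castSucc_lt_last _

theorem eulerian_succ_eq_sum (m : ℕ) :
    eulerian m (N + 1) = ∑ v : Perm (Fin N), #{k | descents (insertMax v k) = m} := by
  calc eulerian m (N + 1)
      = #{p : Perm (Fin N) × Fin (N + 1) | descents (insertMax p.1 p.2) = m} :=
        (card_bijective _ insertMax_bijective fun p => by simp).symm
    _ = ∑ v : Perm (Fin N), #{k | descents (insertMax v k) = m} := by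
        simp only [card_filter, Fintype.sum_prod_type]

end insertMax

theorem eulerian_succ_succ (m N : ℕ) :
    eulerian (m + 1) (N + 1) = (m + 2) * eulerian (m + 1) N + (N - m) * eulerian m N := by
  have hfiber : ∀ v : Equiv.Perm (Fin N), #{k | descents (insertMax v k) = m + 1} =
      (if descents v = m + 1 then m + 2 else 0) + (if descents v = m then N - m else 0) := by
    intro v
    obtain hd | hd | ⟨hd₁, hd₂⟩ : descents v = m + 1 ∨ descents v = m ∨
        (descents v ≠ m + 1 ∧ descents v ≠ m) := by omega
    · rw [if_pos hd, if_neg (by omega), ← hd, card_filter_descents_insertMax_eq]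
      omega
    · rw [if_neg (by omega), if_pos hd, ← hd, card_filter_descents_insertMax_eq_add_one]
      omega
    · rw [if_neg hd₁, if_neg hd₂, card_eq_zero, filter_eq_empty_iff]
      intro k _
      rcases descents_insertMax_eq_or v k with h | h <;> omega
  rw [eulerian_succ_eq_sum, sum_congr rfl fun v _ => hfiber v, sum_add_distrib, ← sum_filter,
    ← sum_filter, sum_const, sum_const, smul_eq_mul, smul_eq_mul, eulerian, eulerian]
  ring

end Eulerian

/-- The Eulerian-Catalan number `EC(n) = A(n,2n+1)/(n+1)` satisfies
`EC(n) = 2·A(n,2n)`; in particular `n+1` divides `A(n,2n+1)`. -/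
theorem eulerianCatalan_eq_two_mul (n : ℕ) (hn : 1 ≤ n) :
    (n + 1) ∣ eulerian n (2 * n + 1) ∧
      eulerian n (2 * n + 1) / (n + 1) = 2 * eulerian n (2 * n) := by
  obtain ⟨m, rfl⟩ : ∃ m, n = m + 1 := ⟨n - 1, by omega⟩
  have hsymm : eulerian m (2 * (m + 1)) = eulerian (m + 1) (2 * (m + 1)) := by
    rw [← Eulerian.eulerian_symm (m + 1) (by omega), show 2 * (m + 1) - 1 - (m + 1) = m by omega]
  have key : eulerian (m + 1) (2 * (m + 1) + 1) =
      (m + 1 + 1) * (2 * eulerian (m + 1) (2 * (m + 1))) := by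
    rw [Eulerian.eulerian_succ_succ, ← hsymm, show 2 * (m + 1) - m = m + 2 by omega]
    ring
  exact ⟨⟨_, key⟩, by rw [key, Nat.mul_div_cancel_left _ (by omega)]⟩
end

section
/- For every n ≥ 1, the central Eulerian number A(n,2n+1) is divisible by n+1. -/
open scoped Classical

namespace CentralEuler

open Finset Equiv

variable {M : ℕ}

/-- Indicator of a descent of `w` at position `i`. -/
noncomputable def c (w : Equiv.Perm (Fin M)) (i : ℕ) : ℕ :=
  if h : i + 1 < M then (if w ⟨i + 1, h⟩ < w ⟨i, Nat.lt_of_succ_lt h⟩ then 1 else 0) else 0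

lemma c_le_one (w : Equiv.Perm (Fin M)) (i : ℕ) : c w i ≤ 1 := by
  unfold c
  split
  · split <;> simp
  · simp

lemma c_cases (w : Equiv.Perm (Fin M)) (i : ℕ) : c w i = 0 ∨ c w i = 1 :=
  Nat.le_one_iff_eq_zero_or_eq_one.mp (c_le_one w i)

lemma descentsIn_eq_sum (w : Equiv.Perm (Fin M)) (ℓ : ℕ) :
    descentsIn w ℓ = ∑ i ∈ Finset.range ℓ, c w i := by
  rw [descentsIn, Finset.card_filter]
  refine Finset.sum_congr rfl fun i _ => ?_
  by_cases h : i + 1 < M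
  · have : (∃ h' : i + 1 < M, w ⟨i + 1, h'⟩ < w ⟨i, Nat.lt_of_succ_lt h'⟩) ↔
        w ⟨i + 1, h⟩ < w ⟨i, Nat.lt_of_succ_lt h⟩ := ⟨fun ⟨_, hq⟩ => hq, fun hq => ⟨h, hq⟩⟩
    rw [c, dif_pos h]
    simp [this]
  · rw [c, dif_neg h]
    simp [h]

lemma descents_eq_sum (w : Equiv.Perm (Fin M)) :
    descents w = ∑ i ∈ Finset.range (M - 1), c w i := by
  rw [descents, descentsIn_eq_sum]

lemma descents_succ_eq_sum (v : Equiv.Perm (Fin (M + 1))) :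
    descents v = ∑ i ∈ Finset.range M, c v i := by
  rw [descents, descentsIn_eq_sum]
  simp

/-- Insert the maximal value `M` at position `p` in the word of `w`. -/
noncomputable def ins (w : Equiv.Perm (Fin M)) (p : Fin (M + 1)) : Equiv.Perm (Fin (M + 1)) :=
  (finSuccEquiv' p).trans ((w.optionCongr).trans (finSuccEquiv' (Fin.last M)).symm)

lemma ins_apply_self (w : Equiv.Perm (Fin M)) (p : Fin (M + 1)) :
    ins w p p = Fin.last M := by
  simp [ins, finSuccEquiv'_at, finSuccEquiv'_symm_none]

lemma ins_apply_succAbove (w : Equiv.Perm (Fin M)) (p : Fin (M + 1)) (j : Fin M) :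
    ins w p (p.succAbove j) = (w j).castSucc := by
  simp [ins, finSuccEquiv'_succAbove, finSuccEquiv'_symm_some, Fin.succAbove_last]

lemma ins_apply_lt (w : Equiv.Perm (Fin M)) (p : Fin (M + 1)) {i : ℕ}
    (hip : i < (p : ℕ)) (hi : i < M + 1) :
    ins w p ⟨i, hi⟩ = (w ⟨i, Nat.lt_of_lt_of_le hip (Nat.lt_succ_iff.mp p.isLt)⟩).castSucc := by
  have hiM : i < M := by have := p.isLt; omega
  have : (⟨i, hi⟩ : Fin (M + 1)) = p.succAbove ⟨i, hiM⟩ := by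
    rw [Fin.succAbove_of_castSucc_lt]
    · rfl
    · exact hip
  rw [this, ins_apply_succAbove]

lemma ins_apply_gt (w : Equiv.Perm (Fin M)) (p : Fin (M + 1)) {i : ℕ}
    (hip : (p : ℕ) < i) (hi : i < M + 1) :
    ins w p ⟨i, hi⟩ = (w ⟨i - 1, by omega⟩).castSucc := by
  have : (⟨i, hi⟩ : Fin (M + 1)) = p.succAbove ⟨i - 1, by omega⟩ := by
    rw [Fin.succAbove_of_le_castSucc]
    · exact Fin.ext (by simp; omega)
    · exact by simp [Fin.le_def]; omega
  rw [this, ins_apply_succAbove]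

lemma c_succ (v : Equiv.Perm (Fin (M + 1))) {i : ℕ} (hi : i + 1 < M + 1) :
    c v i = if v ⟨i + 1, hi⟩ < v ⟨i, Nat.lt_of_succ_lt hi⟩ then 1 else 0 := by
  rw [c, dif_pos hi]

lemma c_ins_lt (w : Equiv.Perm (Fin M)) (p : Fin (M + 1)) {i : ℕ} (h : i + 1 < (p : ℕ)) :
    c (ins w p) i = c w i := by
  have hp : (p : ℕ) ≤ M := Nat.lt_succ_iff.mp p.isLt
  have h1 : i + 1 < M + 1 := by omega
  have h2 : i + 1 < M := by omega
  rw [c_succ _ h1, ins_apply_lt w p h h1,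
    ins_apply_lt w p (by omega) (Nat.lt_of_succ_lt h1), c, dif_pos h2]
  simp only [Fin.castSucc_lt_castSucc_iff]

lemma c_ins_eqp (w : Equiv.Perm (Fin M)) (p : Fin (M + 1)) {i : ℕ} (h : i + 1 = (p : ℕ)) :
    c (ins w p) i = 0 := by
  have hp : (p : ℕ) ≤ M := Nat.lt_succ_iff.mp p.isLt
  have h1 : i + 1 < M + 1 := by omega
  have hip : (⟨i + 1, h1⟩ : Fin (M + 1)) = p := Fin.ext h
  rw [c_succ _ h1, hip, ins_apply_self, ins_apply_lt w p (by omega) (Nat.lt_of_succ_lt h1),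
    if_neg (Fin.not_lt.mpr (Fin.le_last _))]

lemma c_ins_eq (w : Equiv.Perm (Fin M)) (p : Fin (M + 1)) {i : ℕ} (h : i = (p : ℕ))
    (hiM : i < M) : c (ins w p) i = 1 := by
  have h1 : i + 1 < M + 1 := by omega
  have hip : (⟨i, Nat.lt_of_succ_lt h1⟩ : Fin (M + 1)) = p := Fin.ext h
  rw [c_succ _ h1, hip, ins_apply_self, ins_apply_gt w p (by omega) h1,
    if_pos (Fin.castSucc_lt_last _)]

lemma c_ins_gt (w : Equiv.Perm (Fin M)) (p : Fin (M + 1)) {i : ℕ} (h : (p : ℕ) < i)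
    (hiM : i < M) : c (ins w p) i = c w (i - 1) := by
  have h1 : i + 1 < M + 1 := by omega
  have h2 : i - 1 + 1 < M := by omega
  rw [c_succ _ h1, ins_apply_gt w p (by omega) h1, ins_apply_gt w p h (Nat.lt_of_succ_lt h1),
    c, dif_pos h2]
  simp only [Fin.castSucc_lt_castSucc_iff]
  have e1 : i + 1 - 1 = i - 1 + 1 := by omega
  congr 1 <;> · congr 1 <;> exact Fin.ext (by simp [e1])

/-- Indicator that inserting at position `i` preserves the number of descents. -/
noncomputable def G (w : Equiv.Perm (Fin M)) (i : ℕ) : ℕ :=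
  if i = M ∨ (0 < i ∧ c w (i - 1) = 1) then 1 else 0

lemma G_le_one (w : Equiv.Perm (Fin M)) (i : ℕ) : G w i ≤ 1 := by
  unfold G; split <;> simp

lemma master (hM : 0 < M) (w : Equiv.Perm (Fin M)) (p : Fin (M + 1)) :
    descents (ins w p) + G w (p : ℕ) = descents w + 1 := by
  rw [descents_succ_eq_sum, descents_eq_sum]
  rcases Nat.lt_or_ge (p : ℕ) M with hp | hp
  · rcases Nat.eq_zero_or_pos (p : ℕ) with hp0 | hp0
    · -- insertion at the front
      obtain ⟨m, rfl⟩ : ∃ m, M = m + 1 := ⟨M - 1, by omega⟩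
      have hG : G w (p : ℕ) = 0 := by
        rw [G, if_neg]; omega
      rw [hG, Finset.sum_range_succ']
      have h0 : c (ins w p) 0 = 1 := c_ins_eq w p (by omega) (by omega)
      have hrest : ∀ i ∈ Finset.range m, c (ins w p) (i + 1) = c w i := by
        intro i hi
        simp only [Finset.mem_range] at hi
        rw [c_ins_gt w p (by omega) (by omega), Nat.add_sub_cancel]
      rw [h0, Finset.sum_congr rfl hrest]

      simp
    · -- insertion in the middle, 1 ≤ p < M
      have hq1 : (p : ℕ) - 1 < M - 1 := by omega
      have hG : G w (p : ℕ) = c w ((p : ℕ) - 1) := by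
        rw [G]
        rcases c_cases w ((p : ℕ) - 1) with h | h <;> rw [h]
        · rw [if_neg]; omega
        · rw [if_pos]; omega
      rw [hG]
      have e1 : ∑ i ∈ Finset.range M, c (ins w p) i =
          ∑ i ∈ Finset.Ico 0 ((p : ℕ)) , c (ins w p) i +
          ∑ i ∈ Finset.Ico ((p : ℕ)) M, c (ins w p) i := by
        rw [Finset.range_eq_Ico, Finset.sum_Ico_consecutive _ (Nat.zero_le _) (le_of_lt hp)]
      have e2 : ∑ i ∈ Finset.Ico ((p : ℕ)) M, c (ins w p) i =
          1 + ∑ i ∈ Finset.Ico ((p : ℕ) + 1) M, c (ins w p) i := by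
        rw [Finset.sum_eq_sum_Ico_succ_bot hp, c_ins_eq w p rfl hp]
      have e3 : ∑ i ∈ Finset.Ico ((p : ℕ) + 1) M, c (ins w p) i =
          ∑ i ∈ Finset.Ico ((p : ℕ)) (M - 1), c w i := by
        rw [Finset.sum_Ico_eq_sum_range, Finset.sum_Ico_eq_sum_range]
        have hM' : M - ((p : ℕ) + 1) = M - 1 - (p : ℕ) := by omega
        rw [hM']
        refine Finset.sum_congr rfl fun k hk => ?_
        simp only [Finset.mem_range] at hk
        rw [c_ins_gt w p (by omega) (by omega)]
        congr 1
        omega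
      have e4 : ∑ i ∈ Finset.Ico 0 ((p : ℕ)) , c (ins w p) i =
          ∑ i ∈ Finset.Ico 0 ((p : ℕ) - 1), c w i := by
        obtain ⟨r, hr⟩ : ∃ r, (p : ℕ) = r + 1 := ⟨(p : ℕ) - 1, by omega⟩
        rw [hr, Finset.sum_Ico_succ_top (Nat.zero_le _), c_ins_eqp w p (by omega)]
        have : r + 1 - 1 = r := by omega
        rw [this, add_zero]
        refine Finset.sum_congr rfl fun i hi => ?_
        simp only [Finset.mem_Ico] at hi
        exact c_ins_lt w p (by omega)
      have f1 : ∑ i ∈ Finset.range (M - 1), c w i =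
          ∑ i ∈ Finset.Ico 0 ((p : ℕ) - 1), c w i +
          ∑ i ∈ Finset.Ico ((p : ℕ) - 1) (M - 1), c w i := by
        rw [Finset.range_eq_Ico, Finset.sum_Ico_consecutive _ (Nat.zero_le _) (by omega)]
      have f2 : ∑ i ∈ Finset.Ico ((p : ℕ) - 1) (M - 1), c w i =
          c w ((p : ℕ) - 1) + ∑ i ∈ Finset.Ico ((p : ℕ)) (M - 1), c w i := by
        rw [Finset.sum_eq_sum_Ico_succ_bot hq1]
        have h5 : (p : ℕ) - 1 + 1 = (p : ℕ) := by omega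
        rw [h5]
      rw [e1, e2, e3, e4, f1, f2]
      ring
  · -- insertion at the end
    have hpM : (p : ℕ) = M := by have := p.isLt; omega
    have hG : G w (p : ℕ) = 1 := by rw [G, if_pos (Or.inl hpM)]
    rw [hG]
    obtain ⟨m, rfl⟩ : ∃ m, M = m + 1 := ⟨M - 1, by omega⟩
    rw [Finset.sum_range_succ, c_ins_eqp w p (by omega), add_zero]
    have : ∀ i ∈ Finset.range m, c (ins w p) i = c w i := by
      intro i hi
      simp only [Finset.mem_range] at hi
      exact c_ins_lt w p (by omega)
    rw [Finset.sum_congr rfl this]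
    simp

lemma ins_bijective :
    Function.Bijective (fun x : Equiv.Perm (Fin M) × Fin (M + 1) => ins x.1 x.2) := by
  constructor
  · rintro ⟨w, p⟩ ⟨w', p'⟩ h
    simp only at h
    have hp : p = p' := by
      have h1 : ins w' p' p = Fin.last M := by rw [← h, ins_apply_self]
      have h2 : ins w' p' p' = Fin.last M := ins_apply_self w' p'
      exact (ins w' p').injective (h1.trans h2.symm)
    subst hp
    have hw : w = w' := by
      apply Equiv.ext
      intro j
      have h3 := DFunLike.congr_fun h (p.succAbove j)
      rw [ins_apply_succAbove, ins_apply_succAbove] at h3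
      exact Fin.castSucc_injective M h3
    rw [hw]
  · intro v
    set p := v.symm (Fin.last M) with hpdef
    set e : Option (Fin M) ≃ Option (Fin M) :=
      ((finSuccEquiv' p).symm.trans v).trans (finSuccEquiv' (Fin.last M)) with hedef
    have he : e none = none := by
      rw [hedef]
      simp only [Equiv.trans_apply, finSuccEquiv'_symm_none]
      rw [hpdef, Equiv.apply_symm_apply, finSuccEquiv'_at]
    have hoc : (Equiv.removeNone e).optionCongr = e := by
      apply Equiv.ext
      intro x
      cases x with
      | none => simp [he]
      | some a =>
        have hne : ∃ x', e (some a) = some x' := by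
          cases hx : e (some a) with
          | none => exact absurd (e.injective (hx.trans he.symm)) (by simp)
          | some b => exact ⟨b, rfl⟩
        show (Equiv.removeNone e).optionCongr (some a) = e (some a)
        rw [Equiv.optionCongr_apply, Option.map_some]
        exact Equiv.removeNone_some e hne
    refine ⟨(Equiv.removeNone e, p), ?_⟩
    simp only
    have : ins (Equiv.removeNone e) p =
        (finSuccEquiv' p).trans (e.trans (finSuccEquiv' (Fin.last M)).symm) := by
      rw [ins, hoc]
    rw [this, hedef]
    apply Equiv.ext
    intro x
    simp

lemma G_sum (hM : 0 < M) (w : Equiv.Perm (Fin M)) :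
    ∑ i ∈ Finset.range (M + 1), G w i = descents w + 1 := by
  obtain ⟨m, rfl⟩ : ∃ m, M = m + 1 := ⟨M - 1, by omega⟩
  rw [Finset.sum_range_succ, Finset.sum_range_succ']
  have hGM : G w (m + 1) = 1 := by rw [G, if_pos (Or.inl rfl)]
  have hG0 : G w 0 = 0 := by rw [G, if_neg]; omega
  have hmid : ∀ i ∈ Finset.range m, G w (i + 1) = c w i := by
    intro i hi
    simp only [Finset.mem_range] at hi
    rw [G, Nat.add_sub_cancel]
    rcases c_cases w i with h | h <;> rw [h]
    · rw [if_neg]; omega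
    · rw [if_pos]; omega
  rw [hGM, hG0, Finset.sum_congr rfl hmid, descents_eq_sum]
  simp

lemma count_per_w (n : ℕ) (hn : 1 ≤ n) (w : Equiv.Perm (Fin (2 * n))) :
    (n + 1) ∣ ∑ p : Fin (2 * n + 1), (if descents (ins w p) = n then 1 else 0) := by
  have hM : 0 < 2 * n := by omega
  have hma := fun p : Fin (2 * n + 1) => master hM w p
  have hGsum : ∑ p : Fin (2 * n + 1), G w (p : ℕ) = descents w + 1 := by
    rw [Fin.sum_univ_eq_sum_range (fun i => G w i) (2 * n + 1)]
    exact G_sum hM w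
  rcases eq_or_ne (descents w) n with hd | hd
  · have hpt : ∀ p : Fin (2 * n + 1),
        (if descents (ins w p) = n then 1 else 0) = G w (p : ℕ) := by
      intro p
      have h1 := hma p
      rcases Nat.le_one_iff_eq_zero_or_eq_one.mp (G_le_one w (p : ℕ)) with h | h <;>
        rw [h] at h1 ⊢
      · rw [if_neg]; omega
      · rw [if_pos]; omega
    rw [Finset.sum_congr rfl (fun p _ => hpt p), hGsum, hd]
  · rcases eq_or_ne (descents w + 1) n with hd1 | hd1
    · have hsum2 : (∑ p : Fin (2 * n + 1), (if descents (ins w p) = n then 1 else 0)) +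
          (descents w + 1) = 2 * n + 1 := by
        rw [← hGsum, ← Finset.sum_add_distrib]
        have hpt : ∀ p : Fin (2 * n + 1),
            (if descents (ins w p) = n then 1 else 0) + G w (p : ℕ) = 1 := by
          intro p
          have h1 := hma p
          rcases Nat.le_one_iff_eq_zero_or_eq_one.mp (G_le_one w (p : ℕ)) with h | h <;>
            rw [h] at h1 ⊢
          · rw [if_pos] <;> omega
          · rw [if_neg] <;> omega
        rw [Finset.sum_congr rfl (fun p _ => hpt p)]
        simp
      have hfin : ∑ p : Fin (2 * n + 1), (if descents (ins w p) = n then 1 else 0) = n + 1 := by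
        omega
      rw [hfin]
    · have hpt : ∀ p : Fin (2 * n + 1), (if descents (ins w p) = n then 1 else 0) = 0 := by
        intro p
        have h1 := hma p
        have h2 := G_le_one w (p : ℕ)
        rw [if_neg]
        omega
      rw [Finset.sum_congr rfl (fun p _ => hpt p)]
      simp

end CentralEuler

/-- The central Eulerian number `A(n,2n+1)` is divisible by `n+1`. -/
theorem succ_dvd_central_eulerian (n : ℕ) (hn : 1 ≤ n) :
    (n + 1) ∣ eulerian n (2 * n + 1) := by
  rw [eulerian, Finset.card_filter]
  have hbij := @CentralEuler.ins_bijective (2 * n)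
  rw [← Function.Bijective.sum_comp hbij (fun v => if descents v = n then 1 else 0)]
  rw [Fintype.sum_prod_type]
  exact Finset.dvd_sum fun w _ => CentralEuler.count_per_w n hn w
end

section
/- The number of permutations w in S_{2n+1} whose ascent/descent vector is a ballot sequence (i.e., every initial segment has at least as many ascents as descents) equals A(n,2n+1)/(n+1), where A(n,2n+1) is the central Eulerian number. -/
open scoped Classical

/-- A permutation `w ∈ S_{2n+1}` is a Dyck permutation if its ascent/descent
vector is a ballot sequence: every initial segment has at least as many
ascents (0's) as descents (1's); equivalently its lattice path ends at `(n,n)`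
(i.e. `w` has exactly `n` descents, as noted in the source) and never goes
above the diagonal. -/
noncomputable def IsDyckPerm (n : ℕ) (w : Equiv.Perm (Fin (2 * n + 1))) : Prop :=
  descents w = n ∧ ∀ ℓ ≤ 2 * n, descentsIn w ℓ ≤ ℓ - descentsIn w ℓ

/-!
Rotating `w ∈ S_{2n+1}` to `w ∘ (· + j)` (indices mod `2n+1`) keeps its cyclic step sequence,
`+1` at a cyclic ascent and `-1` at a cyclic descent; the ascent/descent vector of the rotation
by `j` is the window of `2n` steps starting at `j`, the step at `j - 1` being left out. If `w` has
`n` descents the cyclic steps sum to `±1`, so by the cycle lemma exactly one rotation of `w` is a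
Dyck permutation. Conversely a Dyck permutation has exactly `n + 1` rotations with `n` descents,
namely those whose left-out step has the sign of the total sum. Double counting pairs
(permutation with `n` descents, Dyck rotation of it) gives `A(n, 2n+1) = (n + 1) · #Dyck`.
-/

open Finset

section CycleLemma

variable {P : ℕ → ℤ} {m : ℕ} {T : ℤ}

def IsDyckStart (P : ℕ → ℤ) (m j : ℕ) : Prop :=
  P (j + m) = P j ∧ ∀ ℓ ≤ m, P j ≤ P (j + ℓ)

lemma isDyckStart_add_period (hper : ∀ k, P (k + (m + 1)) = P k + T) (j : ℕ) :
    IsDyckStart P m (j + (m + 1)) ↔ IsDyckStart P m j := by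
  have hshift : ∀ ℓ, P (j + (m + 1) + ℓ) = P (j + ℓ) + T := fun ℓ => by
    rw [← hper, Nat.add_right_comm]
  simp only [IsDyckStart, hshift, hper, add_le_add_iff_right, add_left_inj]

lemma eq_of_isDyckStart (hper : ∀ k, P (k + (m + 1)) = P k + T) (hT : T ≠ 0) {j d : ℕ}
    (hj : IsDyckStart P m j) (hjd : IsDyckStart P m (j + d)) (hd : d ≤ m) : d = 0 := by
  by_contra hd0
  have h₁ := hj.2 d hd
  have h₂ := hjd.2 (m - d) (by omega)
  rw [show j + d + (m - d) = j + m by omega, hj.1] at h₂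
  rcases hT.lt_or_gt with hT | hT
  · -- the level `P j + T` is reached at `j + m + 1`, inside the window of `j + d`
    have := hjd.2 (m + 1 - d) (by omega)
    rw [show j + d + (m + 1 - d) = j + (m + 1) by omega, hper] at this
    omega
  · -- the level `P j - T` is reached at `j + d - 1`, inside the window of `j`
    have h₃ := hj.2 (d - 1) (by omega)
    have h₄ := hper (j + (d - 1))
    rw [show j + (d - 1) + (m + 1) = j + d + m by omega, hjd.1] at h₄
    omega

lemma exists_isDyckStart_of_neg (hstep : ∀ k, P (k + 1) = P k + 1 ∨ P (k + 1) = P k - 1)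
    (hper : ∀ k, P (k + (m + 1)) = P k - 1) :
    ∃ j < m + 1, IsDyckStart P m j := by
  have hmin : ∃ j, j < m + 1 ∧ ∀ k < m + 1, P j ≤ P k := by
    obtain ⟨j, hj, hjmin⟩ := (range (m + 1)).exists_min_image P ⟨0, by simp⟩
    exact ⟨j, by simpa using hj, fun k hk => hjmin k (by simpa using hk)⟩
  obtain ⟨hjN, hjmin⟩ := Nat.find_spec hmin
  set j := Nat.find hmin
  have hbefore : ∀ k < j, P j < P k := fun k hk => by
    by_contra! hkj
    exact Nat.find_min hmin hk ⟨by omega, fun i hi => hkj.trans (hjmin i hi)⟩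
  have hwindow : ∀ ℓ ≤ m, P j ≤ P (j + ℓ) := fun ℓ hℓ => by
    by_cases hk : j + ℓ < m + 1
    · exact hjmin _ hk
    · have := hper (j + ℓ - (m + 1))
      have := hbefore (j + ℓ - (m + 1)) (by omega)
      rw [Nat.sub_add_cancel (by omega)] at *
      omega
  refine ⟨j, hjN, ?_, hwindow⟩
  have := hper j
  rw [← Nat.add_assoc] at this
  rcases hstep (j + m) with h | h <;> have := hwindow m le_rfl <;> omega

lemma exists_isDyckStart_of_pos (hstep : ∀ k, P (k + 1) = P k + 1 ∨ P (k + 1) = P k - 1)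
    (hper : ∀ k, P (k + (m + 1)) = P k + 1) :
    ∃ j < m + 1, IsDyckStart P m j := by
  have hmin : ∃ b ≤ m, ∀ k < m + 1, P b ≤ P k := by
    obtain ⟨b, hb, hbmin⟩ := (range (m + 1)).exists_min_image P ⟨0, by simp⟩
    exact ⟨b, by simp at hb; omega, fun k hk => hbmin k (by simpa using hk)⟩
  set b := Nat.findGreatest (fun b => ∀ k < m + 1, P b ≤ P k) m
  obtain ⟨b₀, hb₀, hb₀min⟩ := hmin
  have hbmin : ∀ k < m + 1, P b ≤ P k :=
    Nat.findGreatest_spec (P := fun b => ∀ k < m + 1, P b ≤ P k) hb₀ hb₀min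
  have hbm : b ≤ m := Nat.findGreatest_le m
  have hafter : ∀ k, b < k → k ≤ b + (m + 1) → P b < P k := fun k hk hk' => by
    by_cases hkm : k ≤ m
    · by_contra! hkb
      exact Nat.findGreatest_is_greatest hk hkm fun i hi => hkb.trans (hbmin i hi)
    · have := hper (k - (m + 1))
      have := hbmin (k - (m + 1)) (by omega)
      rw [Nat.sub_add_cancel (by omega)] at *
      omega
  -- the Dyck window starts right after the last minimum
  have hstart : IsDyckStart P m (b + 1) := by
    have hup : P (b + 1) = P b + 1 := by
      rcases hstep b with h | h <;> have := hafter (b + 1) (by omega) (by omega) <;> omega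
    refine ⟨by rw [Nat.add_assoc, Nat.add_comm 1, hper, hup], fun ℓ hℓ => ?_⟩
    have := hafter (b + 1 + ℓ) (by omega) (by omega)
    omega
  rcases (show b + 1 < m + 1 ∨ b + 1 = 0 + (m + 1) by omega) with hb | hb
  · exact ⟨b + 1, hb, hstart⟩
  · exact ⟨0, by omega, (isDyckStart_add_period hper 0).mp (hb ▸ hstart)⟩

lemma existsUnique_isDyckStart (hstep : ∀ k, P (k + 1) = P k + 1 ∨ P (k + 1) = P k - 1)
    (hper : ∀ k, P (k + (m + 1)) = P k + T) (hT : T = 1 ∨ T = -1) :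
    ∃! j, j < m + 1 ∧ IsDyckStart P m j := by
  obtain ⟨j, hj, hdyck⟩ : ∃ j < m + 1, IsDyckStart P m j := by
    rcases hT with rfl | rfl
    · exact exists_isDyckStart_of_pos hstep hper
    · exact exists_isDyckStart_of_neg hstep fun k => by rw [hper, Int.add_neg_one]
  refine ⟨j, ⟨hj, hdyck⟩, ?_⟩
  rintro j' ⟨hj', hdyck'⟩
  have hT0 : T ≠ 0 := by omega
  rcases le_total j j' with h | h
  · obtain ⟨d, rfl⟩ := Nat.exists_eq_add_of_le h
    simp [eq_of_isDyckStart hper hT0 hdyck hdyck' (by omega)]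
  · obtain ⟨d, rfl⟩ := Nat.exists_eq_add_of_le h
    simp [eq_of_isDyckStart hper hT0 hdyck' hdyck (by omega)]

end CycleLemma

open Fin.NatCast

lemma descentsIn_le {N : ℕ} (v : Equiv.Perm (Fin N)) (ℓ : ℕ) : descentsIn v ℓ ≤ ℓ :=
  (card_filter_le _ _).trans (card_range ℓ).le

section Rotation

variable {N : ℕ} [NeZero N]

def rotate (w : Equiv.Perm (Fin N)) (j : Fin N) : Equiv.Perm (Fin N) :=
  w * Equiv.addRight j

@[simp]
lemma rotate_apply (w : Equiv.Perm (Fin N)) (j i : Fin N) : rotate w j i = w (i + j) := rfl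

@[simp]
lemma rotate_zero (w : Equiv.Perm (Fin N)) : rotate w 0 = w := by
  ext i; simp

lemma rotate_injective (w : Equiv.Perm (Fin N)) : Function.Injective (rotate w) :=
  fun j j' h => by simpa using congrArg (· 0) h

lemma rotate_eq_comm {v w : Equiv.Perm (Fin N)} {j : Fin N} :
    rotate w j = v ↔ rotate v (-j) = w := by
  constructor <;> rintro rfl <;> ext i <;> simp

def cyclicStep (w : Equiv.Perm (Fin N)) (i : Fin N) : ℤ :=
  if w (i + 1) < w i then -1 else 1

lemma cyclicStep_eq_one_or (w : Equiv.Perm (Fin N)) (i : Fin N) :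
    cyclicStep w i = 1 ∨ cyclicStep w i = -1 := by
  unfold cyclicStep; split_ifs <;> simp

def height (w : Equiv.Perm (Fin N)) (k : ℕ) : ℤ :=
  ∑ i ∈ range k, cyclicStep w i

lemma height_succ (w : Equiv.Perm (Fin N)) (k : ℕ) :
    height w (k + 1) = height w k + cyclicStep w k :=
  sum_range_succ _ _

lemma height_add_period (w : Equiv.Perm (Fin N)) (k : ℕ) :
    height w (k + N) = height w k + height w N := by
  induction k with
  | zero => simp [height]
  | succ k ih =>
    rw [Nat.add_right_comm, height_succ, ih, height_succ, Nat.cast_add, Fin.natCast_self,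
      add_zero]
    ring

lemma sum_cyclicStep (w : Equiv.Perm (Fin N)) : ∑ i, cyclicStep w i = height w N := by
  simp [height, ← Fin.sum_univ_eq_sum_range]

lemma cyclicStep_add_eq (w : Equiv.Perm (Fin N)) (j : Fin N) {i : ℕ} (hi : i + 1 < N) :
    cyclicStep w (j + i : ℕ) = 1 - 2 *
      if ∃ h : i + 1 < N, rotate w j ⟨i + 1, h⟩ < rotate w j ⟨i, Nat.lt_of_succ_lt h⟩
      then 1 else 0 := by
  have h₀ : ((j + i : ℕ) : Fin N) = ⟨i, by omega⟩ + j := by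
    rw [add_comm, Nat.cast_add, Fin.cast_val_eq_self, Fin.natCast_eq_mk]
  have h₁ : (⟨i, by omega⟩ + j : Fin N) + 1 = ⟨i + 1, hi⟩ + j := by
    rw [← Fin.natCast_eq_mk, ← Fin.natCast_eq_mk hi, Nat.cast_succ, add_right_comm]
  simp only [cyclicStep, h₀, h₁, rotate_apply, hi, exists_true_left]
  split_ifs <;> norm_num

lemma height_add_of_lt (w : Equiv.Perm (Fin N)) (j : Fin N) {ℓ : ℕ} (hℓ : ℓ < N) :
    height w (j + ℓ) = height w j + ℓ - 2 * descentsIn (rotate w j) ℓ := by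
  have hterm := fun i (hi : i ∈ range ℓ) =>
    cyclicStep_add_eq w (i := i) j (by rw [mem_range] at hi; omega)
  rw [descentsIn, card_filter, height, sum_range_add, ← height, sum_congr rfl hterm]
  push_cast
  rw [sum_sub_distrib, mul_sum]
  simp only [sum_const, card_range, nsmul_eq_mul, mul_one]
  ring

lemma card_filter_exists_rotate_eq (w : Equiv.Perm (Fin N)) (s : Finset (Equiv.Perm (Fin N))) :
    #{v ∈ s | ∃ j, rotate w j = v} = #{j | rotate w j ∈ s} := by
  rw [← card_image_of_injective _ (rotate_injective w)]
  congr 1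
  ext v
  simp only [mem_filter, mem_univ, true_and, mem_image]
  constructor
  · rintro ⟨hv, j, rfl⟩
    exact ⟨j, hv, rfl⟩
  · rintro ⟨j, hj, rfl⟩
    exact ⟨hj, j, rfl⟩

lemma exists_rotate_eq_comm {v w : Equiv.Perm (Fin N)} :
    (∃ j, rotate w j = v) ↔ ∃ j, rotate v j = w :=
  ⟨fun ⟨j, h⟩ => ⟨-j, rotate_eq_comm.mp h⟩,
    fun ⟨j, h⟩ => ⟨-j, rotate_eq_comm.mpr (by rwa [neg_neg])⟩⟩

end Rotation

lemma two_mul_card_filter_eq_of_sum_eq {α : Type*} [Fintype α] (f : α → ℤ) {T : ℤ}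
    (hf : ∀ i, f i = 1 ∨ f i = -1) (hT : T = 1 ∨ T = -1) (hsum : ∑ i, f i = T) :
    2 * #{i | f i = T} = Fintype.card α + 1 := by
  -- `1 + T * f i` is `2` where `f i = T` and `0` elsewhere
  have hterm : ∀ i, (if f i = T then 2 else 0 : ℤ) = 1 + T * f i := fun i => by
    rcases hf i with h | h <;> rcases hT with rfl | rfl <;> simp [h]
  have : (2 * #{i | f i = T} : ℤ) = Fintype.card α + 1 := calc
    _ = ∑ i, if f i = T then 2 else 0 := by
      rw [card_filter]
      push_cast
      simp only [mul_sum, mul_ite, mul_one, mul_zero]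
    _ = ∑ i, (1 + T * f i) := sum_congr rfl fun i _ => hterm i
    _ = Fintype.card α + T * T := by simp [sum_add_distrib, ← mul_sum, hsum]
    _ = Fintype.card α + 1 := by rcases hT with rfl | rfl <;> norm_num
  exact_mod_cast this

section Dyck

variable {n : ℕ}

lemma descents_rotate_eq_iff (w : Equiv.Perm (Fin (2 * n + 1))) (j : Fin (2 * n + 1)) :
    descents (rotate w j) = n ↔ height w (j + 2 * n) = height w j := by
  have h := height_add_of_lt w j (ℓ := 2 * n) (by omega)
  rw [descents, Nat.add_sub_cancel]
  omega

lemma isDyckPerm_rotate_iff (w : Equiv.Perm (Fin (2 * n + 1))) (j : Fin (2 * n + 1)) :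
    IsDyckPerm n (rotate w j) ↔ IsDyckStart (height w) (2 * n) j := by
  refine and_congr (descents_rotate_eq_iff w j) (forall₂_congr fun ℓ hℓ => ?_)
  have h := height_add_of_lt w j (ℓ := ℓ) (by omega)
  have := descentsIn_le (rotate w j) ℓ
  omega

lemma height_two_mul {w : Equiv.Perm (Fin (2 * n + 1))} (hw : descents w = n) :
    height w (2 * n) = 0 := by
  simpa [height] using (descents_rotate_eq_iff w 0).mp (by simpa using hw)

lemma existsUnique_isDyckPerm_rotate {w : Equiv.Perm (Fin (2 * n + 1))} (hw : descents w = n) :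
    ∃! j, IsDyckPerm n (rotate w j) := by
  have hstep : ∀ k, height w (k + 1) = height w k + 1 ∨ height w (k + 1) = height w k - 1 :=
    fun k => by rcases cyclicStep_eq_one_or w k with h | h <;> simp [height_succ, h, sub_eq_add_neg]
  have hT : height w (2 * n + 1) = 1 ∨ height w (2 * n + 1) = -1 := by
    rw [height_succ, height_two_mul hw, zero_add]
    exact cyclicStep_eq_one_or w _
  obtain ⟨j, ⟨hj, hdyck⟩, huniq⟩ := existsUnique_isDyckStart hstep (height_add_period w) hT
  refine ⟨⟨j, hj⟩, (isDyckPerm_rotate_iff w _).mpr hdyck, fun j' hj' => Fin.ext ?_⟩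
  exact huniq j' ⟨j'.isLt, (isDyckPerm_rotate_iff w j').mp hj'⟩

lemma card_descents_rotate {d : Equiv.Perm (Fin (2 * n + 1))} (hd : IsDyckPerm n d) :
    #{j | descents (rotate d j) = n} = n + 1 := by
  set T := height d (2 * n + 1) with hTdef
  have hT : T = cyclicStep d (2 * n : ℕ) := by
    rw [hTdef, height_succ, height_two_mul hd.1, zero_add]
  -- the step left out of the window of `j` is the cyclic step at `j + 2n = j - 1`
  have hiff : ∀ j : Fin (2 * n + 1),
      descents (rotate d j) = n ↔ cyclicStep d (j + (2 * n : ℕ)) = T := fun j => by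
    have := height_add_period d j
    rw [← Nat.add_assoc, height_succ, Nat.cast_add, Fin.cast_val_eq_self] at this
    rw [descents_rotate_eq_iff]
    omega
  have hcard : #{j | descents (rotate d j) = n} = #{i | cyclicStep d i = T} :=
    card_equiv (Equiv.addRight ((2 * n : ℕ) : Fin (2 * n + 1))) fun j => by
      simp only [mem_filter, mem_univ, true_and, hiff, Equiv.coe_addRight]
  have := two_mul_card_filter_eq_of_sum_eq (cyclicStep d) (T := T) (cyclicStep_eq_one_or d)
    (by rw [hT]; exact cyclicStep_eq_one_or d _) (sum_cyclicStep d)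
  rw [Fintype.card_fin] at this
  omega

lemma card_descents_eq_card_isDyckPerm_mul (n : ℕ) :
    #{w : Equiv.Perm (Fin (2 * n + 1)) | descents w = n}
      = #{w : Equiv.Perm (Fin (2 * n + 1)) | IsDyckPerm n w} * (n + 1) := by
  have := card_mul_eq_card_mul (fun w d => ∃ j, rotate w j = d) (m := 1) (n := n + 1)
    (s := {w : Equiv.Perm (Fin (2 * n + 1)) | descents w = n}) (t := {w | IsDyckPerm n w})
    (fun w hw => by
      rw [bipartiteAbove, card_filter_exists_rotate_eq, card_eq_one_iff_existsUnique]
      simpa using existsUnique_isDyckPerm_rotate (mem_filter.mp hw).2)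
    (fun d hd => by
      simp only [bipartiteBelow, exists_rotate_eq_comm]
      rw [card_filter_exists_rotate_eq]
      simpa using card_descents_rotate (mem_filter.mp hd).2)
  simpa using this

end Dyck

theorem card_dyckPerm_eq_eulerianCatalan_general (n : ℕ) :
    (Finset.univ.filter (fun w : Equiv.Perm (Fin (2 * n + 1)) => IsDyckPerm n w)).card
      = eulerian n (2 * n + 1) / (n + 1) := by
  rw [eulerian, card_descents_eq_card_isDyckPerm_mul, Nat.mul_div_cancel _ n.succ_pos]

/-- The number of Dyck permutations in `S_{2n+1}` is the Eulerian-Catalan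
number `A(n, 2n+1)/(n+1)`. -/
theorem card_dyckPerm_eq_eulerianCatalan (n : ℕ) (hn : 1 ≤ n) :
    (Finset.univ.filter (fun w : Equiv.Perm (Fin (2 * n + 1)) => IsDyckPerm n w)).card
      = eulerian n (2 * n + 1) / (n + 1) :=
  card_dyckPerm_eq_eulerianCatalan_general n
end

section
/- The number of Dyck permutations in S_{2n+1} equals A(n-1,2n) + A(n,2n), where A(m,N) is the number of permutations of [N] with m descents. -/
open scoped Classical

/-!
Read the descent word of `w ∈ S_{2n+1}` cyclically as a `±1` walk (descent `+1`, ascent `-1`).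
Rotating `w`, i.e. precomposing it with `x ↦ x + j` on `ℤ/(2n+1)`, restarts the walk at time
`j`, and the displacement over a full period is rotation invariant. A Dyck permutation is a
rotation at which the walk stays weakly below its start and is back there after `2n` steps; its
displacement is therefore `±1`, and conversely, by the cycle lemma, a walk of displacement `±1`
has exactly one such starting point per period. Every rotation class also contains exactly one
permutation with its maximum in the last position, and for those a displacement of `±1` means
`n - 1` or `n` descents, which deleting the maximum preserves. So Dyck permutations and
permutations with maximum last and `n - 1` or `n` descents are transversals of the same rotation
classes.
-/

open Finset Equiv
open Fin.NatCast

section Transversal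

variable {α : Type*} {r : α → α → Prop} {B C : Finset α}

theorem Finset.card_le_card_of_forall_exists_rel (hr : Equivalence r)
    (hB : ∀ x ∈ B, ∀ y ∈ B, r x y → x = y) (hBC : ∀ x ∈ B, ∃ y ∈ C, r x y) :
    #B ≤ #C := by
  choose! f hfC hf using hBC
  refine card_le_card_of_injOn f hfC fun x hx y hy hxy => hB x hx y hy ?_
  exact hr.trans (hf x hx) (hxy ▸ hr.symm (hf y hy))

theorem Finset.card_eq_card_of_forall_exists_rel (hr : Equivalence r)
    (hB : ∀ x ∈ B, ∀ y ∈ B, r x y → x = y)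
    (hC : ∀ x ∈ C, ∀ y ∈ C, r x y → x = y) (hBC : ∀ x ∈ B, ∃ y ∈ C, r x y)
    (hCB : ∀ y ∈ C, ∃ x ∈ B, r y x) : #B = #C :=
  (card_le_card_of_forall_exists_rel hr hB hBC).antisymm
    (card_le_card_of_forall_exists_rel hr hC hCB)

end Transversal

section Argmax

variable {β : Type*} [LinearOrder β]

theorem Nat.exists_first_argmax_le (f : ℕ → β) (m : ℕ) :
    ∃ i ≤ m, (∀ k ≤ m, f k ≤ f i) ∧ ∀ k < i, f k < f i := by
  obtain ⟨i, hi, hmax⟩ := (range (m + 1)).exists_max_image f ⟨0, by simp⟩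
  have hex : ∃ k, k ≤ m ∧ f i ≤ f k := ⟨i, by simpa [Nat.lt_succ_iff] using hi, le_rfl⟩
  obtain ⟨hfm, hfi⟩ := Nat.find_spec hex
  refine ⟨Nat.find hex, hfm, fun k hk => (hmax k (by simpa [Nat.lt_succ_iff])).trans hfi,
    fun k hk => ?_⟩
  have hki : ¬ f i ≤ f k := fun h => Nat.find_min hex hk ⟨by omega, h⟩
  exact (not_le.1 hki).trans_le hfi

theorem Nat.exists_last_argmax_le (f : ℕ → β) (m : ℕ) :
    ∃ i ≤ m, (∀ k ≤ m, f k ≤ f i) ∧ ∀ k ≤ m, i < k → f k < f i := by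
  obtain ⟨i, hi, hmax⟩ := (range (m + 1)).exists_max_image f ⟨0, by simp⟩
  have hi : i ≤ m := by simpa [Nat.lt_succ_iff] using hi
  have hfi := Nat.findGreatest_spec (P := fun k => f i ≤ f k) hi le_rfl
  refine ⟨_, Nat.findGreatest_le m,
    fun k hk => (hmax k (by simpa [Nat.lt_succ_iff])).trans hfi, fun k hk hlt => ?_⟩
  have hki := Nat.findGreatest_is_greatest (P := fun k => f i ≤ f k) hlt hk
  exact (not_le.1 hki).trans_le hfi

end Argmax

def IsDyckFrom (P : ℕ → ℤ) (m j : ℕ) : Prop :=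
  (∀ k ≤ m, P (j + k) ≤ P j) ∧ P (j + m) = P j

section CycleLemma

variable {P : ℕ → ℤ} {m : ℕ} {S : ℤ}

theorem isDyckFrom_shift_iff {j : ℕ} :
    IsDyckFrom (fun k => P (j + k) - P j) m 0 ↔ IsDyckFrom P m j := by
  simp [IsDyckFrom, sub_eq_zero]

theorem IsDyckFrom.eq_of_le (hP : ∀ k, P (k + (m + 1)) = P k + S) (hS : S = 1 ∨ S = -1)
    {i j : ℕ} (hi : IsDyckFrom P m i) (hj : IsDyckFrom P m j) (hij : i ≤ j)
    (hji : j ≤ i + m) : i = j := by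
  by_contra hne
  have hij : i < j := lt_of_le_of_ne hij hne
  rcases hS with rfl | rfl
  · -- `P j ≤ P i`, but `j` reaches `P (i + (m + 1)) = P i + 1` within `m` steps
    have h1 := hi.1 (j - i) (by omega)
    have h2 := hj.1 (i + (m + 1) - j) (by omega)
    rw [show i + (j - i) = j by omega] at h1
    rw [show j + (i + (m + 1) - j) = i + (m + 1) by omega, hP] at h2
    omega
  · -- the walk enters a start `j` by a down-step, so `P (j - 1) = P j + 1 ≤ P i ≤ P j`
    have h1 := hi.1 (j - 1 - i) (by omega)
    have h2 := hj.1 (i + m - j) (by omega)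
    have h3 := hP (j - 1)
    rw [show i + (j - 1 - i) = j - 1 by omega] at h1
    rw [show j + (i + m - j) = i + m by omega, hi.2] at h2
    rw [show j - 1 + (m + 1) = j + m by omega, hj.2] at h3
    omega

theorem exists_isDyckFrom (hP : ∀ k, P (k + (m + 1)) = P k + S) (hS : S = 1 ∨ S = -1)
    (hstep : ∀ k, |P (k + 1) - P k| ≤ 1) : ∃ j, IsDyckFrom P m j := by
  have hperiod (k : ℕ) (hk : m + 1 ≤ k) : P k = P (k - (m + 1)) + S := by
    rw [← hP, Nat.sub_add_cancel hk]
  rcases hS with rfl | rfl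
  · -- the walk gains `1` per period: start at the first maximum of a period
    obtain ⟨j, hjm, hmax, hfirst⟩ := Nat.exists_first_argmax_le P m
    have hle (k : ℕ) (hk : k ≤ m) : P (j + k) ≤ P j := by
      rcases le_or_gt (j + k) m with h | h
      · exact hmax _ h
      · have := hfirst (j + k - (m + 1)) (by omega)
        rw [hperiod _ (by omega)]
        omega
    refine ⟨j, hle, le_antisymm (hle m le_rfl) ?_⟩
    have := (abs_le.1 (hstep (j + m))).2
    rw [show j + m + 1 = j + (m + 1) by omega, hP] at this
    omega
  · -- the walk loses `1` per period: start just after the last maximum of a period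
    obtain ⟨i, him, hmax, hlast⟩ := Nat.exists_last_argmax_le P m
    have hdrop : P (i + 1) = P i - 1 := by
      have hlow := (abs_le.1 (hstep i)).1
      rcases lt_or_eq_of_le him with h | rfl
      · have := hlast (i + 1) h (by omega)
        omega
      · have := hmax 0 (Nat.zero_le _)
        have h0 := hperiod (i + 1) (by omega)
        rw [Nat.sub_self] at h0
        omega
    refine ⟨i + 1, fun k hk => ?_, ?_⟩
    · rcases le_or_gt (i + 1 + k) m with h | h
      · have := hlast (i + 1 + k) h (by omega)
        omega
      · have := hmax (i + 1 + k - (m + 1)) (by omega)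
        rw [hperiod _ (by omega)]
        omega
    · rw [show i + 1 + m = i + (m + 1) by omega, hP, hdrop]
      ring

end CycleLemma

section Descents

variable {N : ℕ} (w : Perm (Fin N))

theorem descentsIn_succ (ℓ : ℕ) :
    descentsIn w (ℓ + 1) = descentsIn w ℓ +
      if ∃ h : ℓ + 1 < N, w ⟨ℓ + 1, h⟩ < w ⟨ℓ, Nat.lt_of_succ_lt h⟩ then 1 else 0 := by
  unfold descentsIn
  rw [range_add_one, filter_insert]
  split
  · rw [card_insert_of_notMem (by simp)]
  · rfl

theorem descentsIn_le_s5 (ℓ : ℕ) : descentsIn w ℓ ≤ ℓ :=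
  (card_filter_le _ _).trans (card_range ℓ).le

theorem descentsIn_eq_descents {ℓ : ℕ} (hℓ : N - 1 ≤ ℓ) :
    descentsIn w ℓ = descents w := by
  unfold descents descentsIn
  congr 1
  ext i
  simp only [mem_filter, mem_range]
  exact ⟨fun ⟨_, h, hw⟩ => ⟨by omega, h, hw⟩, fun ⟨_, h, hw⟩ => ⟨by omega, h, hw⟩⟩

end Descents

namespace Equiv.Perm

variable {N : ℕ} (w : Perm (Fin (N + 1)))

/-- Positions are read modulo `N + 1`, so position `N` compares `w N` with `w 0`. A descent
counts `+1`, so Dyck permutations are those whose walk stays weakly below `0`. -/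
def descentSign (i : ℕ) : ℤ :=
  if w ((i + 1 : ℕ) : Fin (N + 1)) < w (i : Fin (N + 1)) then 1 else -1

def descentWalk (k : ℕ) : ℤ :=
  ∑ i ∈ range k, w.descentSign i

def rotate (j : Fin (N + 1)) : Perm (Fin (N + 1)) :=
  (Equiv.addRight j).trans w

theorem rotate_apply (j x : Fin (N + 1)) : w.rotate j x = w (x + j) := rfl

theorem rotate_zero : w.rotate 0 = w := by
  ext x
  simp [rotate_apply]

theorem rotate_rotate (i j : Fin (N + 1)) : (w.rotate j).rotate i = w.rotate (i + j) := by
  ext x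
  simp [rotate_apply, add_assoc]

theorem equivalence_exists_rotate_eq :
    Equivalence (fun u v : Perm (Fin (N + 1)) => ∃ j, u.rotate j = v) where
  refl u := ⟨0, u.rotate_zero⟩
  symm := by
    rintro u _ ⟨j, rfl⟩
    exact ⟨-j, by rw [rotate_rotate, neg_add_cancel, rotate_zero]⟩
  trans := by
    rintro u _ _ ⟨i, rfl⟩ ⟨j, rfl⟩
    exact ⟨j + i, (rotate_rotate _ _ _).symm⟩

theorem abs_descentSign (i : ℕ) : |w.descentSign i| = 1 := by
  unfold descentSign
  split <;> simp

theorem descentSign_add_period (i : ℕ) : w.descentSign (i + (N + 1)) = w.descentSign i := by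
  have hcast (k : ℕ) : ((k + (N + 1) : ℕ) : Fin (N + 1)) = k := by
    rw [Nat.cast_add, Fin.natCast_self, add_zero]
  rw [descentSign, show i + (N + 1) + 1 = i + 1 + (N + 1) by omega, hcast, hcast, descentSign]

theorem descentSign_rotate (j i : ℕ) :
    (w.rotate j).descentSign i = w.descentSign (j + i) := by
  rw [descentSign, descentSign, rotate_apply, rotate_apply, ← Nat.cast_add, ← Nat.cast_add,
    show i + 1 + j = j + i + 1 by omega, add_comm i]

theorem descentWalk_succ (k : ℕ) :
    w.descentWalk (k + 1) = w.descentWalk k + w.descentSign k :=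
  sum_range_succ _ _

theorem descentWalk_add (j k : ℕ) :
    w.descentWalk (j + k) = w.descentWalk j + ∑ i ∈ range k, w.descentSign (j + i) :=
  sum_range_add _ _ _

theorem descentWalk_rotate (j k : ℕ) :
    (w.rotate j).descentWalk k = w.descentWalk (j + k) - w.descentWalk j := by
  rw [descentWalk_add, add_sub_cancel_left]
  simp only [descentWalk, descentSign_rotate]

theorem descentWalk_add_period (k : ℕ) :
    w.descentWalk (k + (N + 1)) = w.descentWalk k + w.descentWalk (N + 1) := by
  rw [add_comm k, descentWalk_add, add_comm (w.descentWalk _)]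
  congr 1
  exact sum_congr rfl fun i _ => by rw [add_comm, descentSign_add_period]

theorem descentWalk_period_rotate (j : Fin (N + 1)) :
    (w.rotate j).descentWalk (N + 1) = w.descentWalk (N + 1) := by
  rw [← Fin.cast_val_eq_self j, descentWalk_rotate, descentWalk_add_period]
  ring

theorem descentWalk_eq_descentsIn {ℓ : ℕ} (hℓ : ℓ ≤ N) :
    w.descentWalk ℓ = 2 * descentsIn w ℓ - ℓ := by
  induction ℓ with
  | zero => simp [descentWalk, descentsIn]
  | succ ℓ ih =>
    have hcast (k : ℕ) (hk : k < N + 1) : ((k : ℕ) : Fin (N + 1)) = ⟨k, hk⟩ :=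
      Fin.ext (Nat.mod_eq_of_lt hk)
    rw [descentWalk_succ, ih (by omega), descentsIn_succ, descentSign,
      hcast ℓ (by omega), hcast (ℓ + 1) (by omega)]
    by_cases h : w ⟨ℓ + 1, by omega⟩ < w ⟨ℓ, by omega⟩
    · rw [if_pos h, if_pos ⟨by omega, h⟩]
      push_cast
      ring
    · rw [if_neg h, if_neg fun ⟨_, h'⟩ => h h']
      push_cast
      ring

theorem descentWalk_period_eq :
    w.descentWalk (N + 1) = 2 * descents w - N + w.descentSign N := by
  rw [descentWalk_succ, descentWalk_eq_descentsIn w le_rfl, descentsIn_eq_descents w (by omega)]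

theorem descentSign_of_apply_last (hN : 0 < N) (hw : w (Fin.last N) = Fin.last N) :
    w.descentSign N = 1 := by
  have hlast : ((N : ℕ) : Fin (N + 1)) = Fin.last N := Fin.natCast_eq_last N
  have hzero : w 0 ≠ Fin.last N := by
    rw [← hw]
    exact w.injective.ne (Fin.ne_of_val_ne (by rw [Fin.val_zero, Fin.val_last]; exact hN.ne))
  rw [descentSign, Fin.natCast_self, hlast, hw, if_pos (Fin.lt_last_iff_ne_last.2 hzero)]

end Equiv.Perm

section Dyck

variable {n : ℕ} {w : Perm (Fin (2 * n + 1))}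

theorem isDyckPerm_iff_isDyckFrom : IsDyckPerm n w ↔ IsDyckFrom w.descentWalk (2 * n) 0 := by
  have hwalk (ℓ : ℕ) (hℓ : ℓ ≤ 2 * n) := w.descentWalk_eq_descentsIn hℓ
  have hdes : descents w = descentsIn w (2 * n) := rfl
  have h0 : w.descentWalk 0 = 0 := sum_range_zero _
  simp only [IsDyckPerm, IsDyckFrom, zero_add, h0, hdes]
  refine and_comm.trans (and_congr (forall₂_congr fun ℓ hℓ => ?_) ?_)
  · have := hwalk ℓ hℓ
    have := descentsIn_le_s5 w ℓ
    omega
  · have := hwalk (2 * n) le_rfl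
    omega

theorem isDyckPerm_rotate_iff_s5 (j : ℕ) :
    IsDyckPerm n (w.rotate j) ↔ IsDyckFrom w.descentWalk (2 * n) j := by
  rw [isDyckPerm_iff_isDyckFrom, funext (w.descentWalk_rotate j), isDyckFrom_shift_iff]

theorem IsDyckPerm.descentWalk_period_eq_one_or (hw : IsDyckPerm n w) :
    w.descentWalk (2 * n + 1) = 1 ∨ w.descentWalk (2 * n + 1) = -1 := by
  have h : w.descentWalk (2 * n) = 0 := by
    rw [w.descentWalk_eq_descentsIn le_rfl, show descentsIn w (2 * n) = n from hw.1]
    push_cast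
    ring
  rw [w.descentWalk_succ, h, zero_add]
  exact (abs_eq zero_le_one).1 (w.abs_descentSign _)

theorem IsDyckPerm.rotate_eq_self (hw : IsDyckPerm n w) {j : Fin (2 * n + 1)}
    (hj : IsDyckPerm n (w.rotate j)) : w.rotate j = w := by
  rw [← Fin.cast_val_eq_self j, isDyckPerm_rotate_iff_s5] at hj
  have hj0 := (isDyckPerm_iff_isDyckFrom.1 hw).eq_of_le w.descentWalk_add_period
    hw.descentWalk_period_eq_one_or hj (Nat.zero_le _) (by omega)
  rw [show j = 0 from Fin.ext hj0.symm, w.rotate_zero]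

theorem exists_isDyckPerm_rotate
    (hw : w.descentWalk (2 * n + 1) = 1 ∨ w.descentWalk (2 * n + 1) = -1) :
    ∃ j, IsDyckPerm n (w.rotate j) := by
  obtain ⟨j, hj⟩ := exists_isDyckFrom w.descentWalk_add_period hw fun k => by
    rw [w.descentWalk_succ, add_sub_cancel_left, w.abs_descentSign]
  exact ⟨j, (isDyckPerm_rotate_iff_s5 j).2 hj⟩

end Dyck

namespace Equiv.Perm

variable {N : ℕ}

theorem rotate_eq_self_of_apply_last {w : Perm (Fin (N + 1))} (hw : w (Fin.last N) = Fin.last N)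
    {j : Fin (N + 1)} (hj : w.rotate j (Fin.last N) = Fin.last N) : w.rotate j = w := by
  have hj0 : Fin.last N + j = Fin.last N := w.injective (hj.trans hw.symm)
  rw [add_eq_left.1 hj0, rotate_zero]

theorem exists_rotate_apply_last (w : Perm (Fin (N + 1))) :
    ∃ j, w.rotate j (Fin.last N) = Fin.last N :=
  ⟨w.symm (Fin.last N) - Fin.last N, by rw [rotate_apply, add_sub_cancel, apply_symm_apply]⟩

def extendLast (v : Perm (Fin N)) : Perm (Fin (N + 1)) :=
  finSuccEquivLast.symm.permCongr v.optionCongr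

theorem extendLast_castSucc (v : Perm (Fin N)) (i : Fin N) :
    extendLast v i.castSucc = (v i).castSucc := by
  simp [extendLast]

theorem extendLast_last (v : Perm (Fin N)) : extendLast v (Fin.last N) = Fin.last N := by
  simp [extendLast]

theorem extendLast_injective : Function.Injective (extendLast (N := N)) :=
  (permCongr _).injective.comp optionCongr_injective

theorem exists_extendLast_eq {u : Perm (Fin (N + 1))} (hu : u (Fin.last N) = Fin.last N) :
    ∃ v, extendLast v = u := by
  set σ := finSuccEquivLast.permCongr u
  have hσ : σ none = none := by simp [σ, hu]
  refine ⟨removeNone σ, ?_⟩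
  rw [extendLast, map_equiv_removeNone, hσ, swap_self, ← Perm.one_def, one_mul,
    ← permCongr_symm, symm_apply_apply]

theorem descentsIn_extendLast (v : Perm (Fin N)) (ℓ : ℕ) :
    descentsIn (extendLast v) ℓ = descentsIn v ℓ := by
  unfold descentsIn
  congr 1
  refine filter_congr fun i _ => ?_
  by_cases hi : i + 1 < N
  · have e (k : ℕ) (hk : k < N) : extendLast v ⟨k, by omega⟩ = (v ⟨k, hk⟩).castSucc :=
      extendLast_castSucc v ⟨k, hk⟩
    simp [hi, show i + 1 < N + 1 by omega, e (i + 1) hi, e i (by omega)]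
  · have hlast : ¬ ∃ h : i + 1 < N + 1,
        extendLast v ⟨i + 1, h⟩ < extendLast v ⟨i, Nat.lt_of_succ_lt h⟩ := by
      rintro ⟨h, hlt⟩
      rw [show (⟨i + 1, h⟩ : Fin (N + 1)) = Fin.last N from Fin.ext (show i + 1 = N by omega),
        extendLast_last] at hlt
      exact (Fin.le_last _).not_gt hlt
    exact iff_of_false hlast fun ⟨h, _⟩ => hi h

theorem descents_extendLast (v : Perm (Fin N)) : descents (extendLast v) = descents v :=
  (descentsIn_extendLast v N).trans (descentsIn_eq_descents v (Nat.sub_le N 1))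

end Equiv.Perm

open Equiv.Perm

theorem card_filter_apply_last_descents_eq (N m : ℕ) :
    #{u : Perm (Fin (N + 1)) | u (Fin.last N) = Fin.last N ∧ descents u = m} = eulerian m N := by
  have himage : univ.filter (fun u : Perm (Fin (N + 1)) =>
        u (Fin.last N) = Fin.last N ∧ descents u = m) =
      (univ.filter fun v : Perm (Fin N) => descents v = m).map
        ⟨extendLast, extendLast_injective⟩ := by
    ext u
    simp only [mem_filter, mem_univ, true_and, mem_map, Function.Embedding.coeFn_mk]
    constructor
    · rintro ⟨hu, hd⟩
      obtain ⟨v, rfl⟩ := exists_extendLast_eq hu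
      exact ⟨v, by rwa [descents_extendLast] at hd, rfl⟩
    · rintro ⟨v, hv, rfl⟩
      exact ⟨extendLast_last v, by rw [descents_extendLast, hv]⟩
  rw [himage, card_map, eulerian]

theorem card_filter_apply_last_descentWalk_eq {n : ℕ} (hn : 1 ≤ n) :
    #{u : Perm (Fin (2 * n + 1)) | u (Fin.last (2 * n)) = Fin.last (2 * n) ∧
      (u.descentWalk (2 * n + 1) = 1 ∨ u.descentWalk (2 * n + 1) = -1)} =
      eulerian (n - 1) (2 * n) + eulerian n (2 * n) := by
  have hwalk (u : Perm (Fin (2 * n + 1))) (hu : u (Fin.last (2 * n)) = Fin.last (2 * n)) :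
      u.descentWalk (2 * n + 1) = 2 * descents u - 2 * n + 1 := by
    rw [descentWalk_period_eq, descentSign_of_apply_last u (by omega) hu]
    push_cast
    ring
  rw [← card_filter_apply_last_descents_eq, ← card_filter_apply_last_descents_eq,
    ← card_union_of_disjoint (disjoint_filter.2 fun u _ h1 h2 => by omega), ← filter_or]
  refine congrArg card (filter_congr fun u _ => ?_)
  by_cases hu : u (Fin.last (2 * n)) = Fin.last (2 * n)
  · simp only [hu, hwalk u hu, true_and]
    omega
  · simp [hu]

/-- The number of Dyck permutations in `S_{2n+1}` equals `A(n-1,2n) + A(n,2n)`. -/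
theorem card_dyckPerm_eq_sum_eulerian (n : ℕ) (hn : 1 ≤ n) :
    (Finset.univ.filter (fun w : Equiv.Perm (Fin (2 * n + 1)) => IsDyckPerm n w)).card
      = eulerian (n - 1) (2 * n) + eulerian n (2 * n) := by
  rw [← card_filter_apply_last_descentWalk_eq hn]
  refine card_eq_card_of_forall_exists_rel equivalence_exists_rotate_eq ?_ ?_ ?_ ?_ <;>
    simp only [mem_filter, mem_univ, true_and]
  · rintro w hw _ hw' ⟨j, rfl⟩
    exact (hw.rotate_eq_self hw').symm
  · rintro u ⟨hu, -⟩ _ ⟨hu', -⟩ ⟨j, rfl⟩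
    exact (rotate_eq_self_of_apply_last hu hu').symm
  · intro w hw
    obtain ⟨j, hj⟩ := w.exists_rotate_apply_last
    refine ⟨w.rotate j, ⟨hj, ?_⟩, j, rfl⟩
    rw [descentWalk_period_rotate]
    exact hw.descentWalk_period_eq_one_or
  · rintro u ⟨-, hu⟩
    obtain ⟨j, hj⟩ := exists_isDyckPerm_rotate hu
    exact ⟨u.rotate j, hj, j, rfl⟩
end

section
/- Fix n ≥ 1 and j with 0 ≤ j ≤ n. The number of permutations w ∈ S_{2n+1} with exactly n descents such that the lattice path L(w) has exactly j exceedances is independent of j, and equals A(n,2n+1)/(n+1). -/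
open scoped Classical

/-- The exceedance of the lattice path `L(w)` of `w ∈ S_{2n+1}`: after `ℓ`
steps the path is at the point `(ℓ - d_ℓ, d_ℓ)` where `d_ℓ` is the number of
descents among the first `ℓ` positions; the exceedance is the number of
`i ∈ {0,…,n}` such that the path contains a point `(i, i')` with `i' > i`. -/
noncomputable def excPath (n : ℕ) (w : Equiv.Perm (Fin (2 * n + 1))) : ℕ :=
  ((Finset.range (n + 1)).filter (fun i =>
    ∃ ℓ ∈ Finset.range (2 * n + 1),
      ℓ - descentsIn w ℓ = i ∧ i < descentsIn w ℓ)).card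

/-!
The rotations `x ↦ w (x + k)` of `w ∈ S_{2n+1}` all read one cyclic word of ascents and
descents, rotation `k` deleting its letter at position `k - 1`. If `w` has `n` descents, the
cyclic word has `n` or `n + 1` of them, and exactly `n + 1` rotations have `n` descents. With
`h(t)` the number of ascents minus the number of descents among the first `t` letters and
`σ = h(2n+1) = ±1`, a cycle-lemma argument shows that the exceedance of such a rotation is the
rank of its potential `(2n+1) h(k) - σ k` among these `n + 1` cuts. As `σ = ±1`, the cuts
`k < 2n+1` have distinct potentials, so each rotation class meets every value `0, …, n` of the
exceedance exactly once, and the `n + 1` fibres of the exceedance all have size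
`A(n, 2n+1) / (n+1)`.
-/

open Finset Function Nat

section Fibers

variable {α β : Type*} [DecidableEq β] {r : α → α → Prop} {s : Finset α} {t : Finset β}
  {f : α → β}

theorem card_filter_eq_card_filter_of_existsUnique (hr : Equivalence r)
    (hex : ∀ x ∈ s, ∀ b ∈ t, ∃ y ∈ s, r x y ∧ f y = b)
    (huniq : ∀ x ∈ s, ∀ y ∈ s, r x y → f x = f y → x = y) {i j : β} (hi : i ∈ t)
    (hj : j ∈ t) :
    #{x ∈ s | f x = i} = #{x ∈ s | f x = j} := by
  choose! g hgs hgr hgf using hex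
  refine card_nbij (g · j) (fun x hx => ?_) (fun x hx x' hx' hxx' => ?_) (fun y hy => ?_)
  · simp only [mem_coe, mem_filter] at hx ⊢
    exact ⟨hgs x hx.1 j hj, hgf x hx.1 j hj⟩
  · simp only [mem_coe, mem_filter] at hx hx'
    replace hxx' : g x j = g x' j := hxx'
    refine huniq x hx.1 x' hx'.1 ?_ (hx.2.trans hx'.2.symm)
    exact hr.trans (hgr x hx.1 j hj) (hxx' ▸ hr.symm (hgr x' hx'.1 j hj))
  · simp only [mem_coe, mem_filter] at hy
    have hx := hgs y hy.1 i hi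
    refine ⟨g y i, by simp [hx, hgf y hy.1 i hi], ?_⟩
    exact (huniq y hy.1 _ (hgs _ hx j hj) (hr.trans (hgr y hy.1 i hi) (hgr _ hx j hj))
      (hy.2.trans (hgf _ hx j hj).symm)).symm

theorem card_eq_card_mul_card_filter_of_existsUnique (hr : Equivalence r)
    (hmaps : ∀ x ∈ s, f x ∈ t) (hex : ∀ x ∈ s, ∀ b ∈ t, ∃ y ∈ s, r x y ∧ f y = b)
    (huniq : ∀ x ∈ s, ∀ y ∈ s, r x y → f x = f y → x = y) {j : β} (hj : j ∈ t) :
    #s = #t * #{x ∈ s | f x = j} := by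
  rw [card_eq_sum_card_fiberwise hmaps]
  exact sum_const_nat fun i hi => card_filter_eq_card_filter_of_existsUnique hr hex huniq hi hj

end Fibers

section Rank

variable {α β : Type*} [LinearOrder β] {s : Finset α} {f : α → β} {a b : α}

theorem card_filter_lt_lt_card (ha : a ∈ s) : #{x ∈ s | f x < f a} < #s :=
  card_lt_card <| filter_ssubset.2 ⟨a, ha, lt_irrefl _⟩

theorem card_filter_lt_lt_card_filter_lt (ha : a ∈ s) (hab : f a < f b) :
    #{x ∈ s | f x < f a} < #{x ∈ s | f x < f b} := by
  refine card_lt_card <| (ssubset_iff_of_subset ?_).2 ⟨a, by simp [ha, hab], by simp⟩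
  intro x
  simp only [mem_filter]
  exact fun hx => ⟨hx.1, hx.2.trans hab⟩

theorem eq_of_card_filter_lt_eq (ha : a ∈ s) (hb : b ∈ s)
    (h : #{x ∈ s | f x < f a} = #{x ∈ s | f x < f b}) : f a = f b := by
  rcases lt_trichotomy (f a) (f b) with hab | hab | hab
  · exact absurd h (card_filter_lt_lt_card_filter_lt ha hab).ne
  · exact hab
  · exact absurd h (card_filter_lt_lt_card_filter_lt hb hab).ne'

theorem exists_card_filter_lt_eq (hf : Set.InjOn f s) {j : ℕ} (hj : j < #s) :
    ∃ a ∈ s, #{x ∈ s | f x < f a} = j := by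
  have hsurj := surjOn_of_injOn_of_card_le (s := s) (t := range #s)
    (fun a => #{x ∈ s | f x < f a})
    (fun a ha => by simpa using card_filter_lt_lt_card ha)
    (fun a ha b hb hab => hf ha hb (eq_of_card_filter_lt_eq ha hb hab)) (by simp)
  simpa using hsurj (mem_range.2 hj)

end Rank

namespace Nat

variable {p q : ℕ → Prop} [DecidablePred p] [DecidablePred q]

theorem count_congr_of_lt {m : ℕ} (h : ∀ i < m, p i ↔ q i) : count p m = count q m := by
  simp only [count_eq_card_filter_range]
  exact congrArg card (filter_congr fun i hi => h i (mem_range.1 hi))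

theorem count_not_add_count (m : ℕ) : count (fun i => ¬p i) m + count p m = m := by
  induction m with
  | zero => simp
  | succ m ih =>
    simp only [count_succ]
    split_ifs <;> omega

theorem _root_.Function.Periodic.count_add_left {M : ℕ} (hp : Periodic p M) (k : ℕ) :
    count (fun t => p (k + t)) M = count p M := by
  have h := count_add' p k M
  simp only [show ∀ x, p (x + M) = p x from hp] at h
  have h' : count p (k + M) = count p k + count p M := h
  have := count_add p k M
  omega

end Nat

theorem Int.mul_add_neg_iff_of_pos_of_lt {M s h : ℤ} (hs : 0 < s) (hsM : s < M) :
    M * h + s < 0 ↔ h < 0 := by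
  constructor <;> intro H
  · by_contra hh
    nlinarith
  · nlinarith

namespace EulerianCatalan

section LatticePath

variable {D : ℕ → Prop} [DecidablePred D] {n : ℕ}

/-- `x - y` at time `t` on the lattice path of the word `D`, whose `i`-th step goes north iff
`D i` holds. -/
def height (D : ℕ → Prop) [DecidablePred D] (t : ℕ) : ℤ := t - 2 * count D t

theorem height_succ (t : ℕ) : height D (t + 1) = height D t + if D t then -1 else 1 := by
  simp only [height, count_succ]
  split_ifs <;> push_cast <;> ring

theorem height_add (a b : ℕ) :
    height D (a + b) = height D a + height (fun i => D (a + i)) b := by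
  simp only [height, count_add]
  push_cast
  ring

theorem height_shift_of_periodic {M : ℕ} (hP : Periodic D M) (k : ℕ) :
    height (fun t => D (k + t)) M = height D M := by
  simp only [height, hP.count_add_left]

theorem height_neg_iff (t : ℕ) : height D t < 0 ↔ t < 2 * count D t := by
  simp only [height]
  omega

def pathExc (n : ℕ) (D : ℕ → Prop) [DecidablePred D] : ℕ :=
  #{i ∈ range (n + 1) | ∃ ℓ ∈ range (2 * n + 1), ℓ - count D ℓ = i ∧ i < count D ℓ}

theorem sub_count_succ (t : ℕ) :
    t + 1 - count D (t + 1) = t - count D t + if D t then 0 else 1 := by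
  have := count_le (p := D) (n := t)
  simp only [count_succ]
  split_ifs <;> omega

theorem sub_count_lt_sub_count {t t' : ℕ} (ht : ¬D t) (htt' : t < t') :
    t - count D t < t' - count D t' := by
  have hmono : Monotone fun t => t - count D t :=
    monotone_nat_of_le_succ fun t => by simp only [sub_count_succ]; omega
  have := sub_count_succ (D := D) t
  rw [if_neg ht] at this
  have := hmono (show t + 1 ≤ t' by omega)
  simp only at this
  omega

/-- A column `i` is exceeded exactly when the path leaves it by an east step from above the
diagonal, namely its last point `(i, y)`. -/
theorem pathExc_eq_count (h : count D (2 * n) = n) :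
    pathExc n D = count (fun t => ¬D t ∧ height D t < 0) (2 * n) := by
  rw [count_eq_card_filter_range, pathExc]
  symm
  refine card_nbij (fun t => t - count D t) (fun t ht => ?_) (fun t ht t' ht' htt' => ?_)
    (fun i hi => ?_)
  · simp only [mem_coe, mem_filter, mem_range, height_neg_iff] at ht ⊢
    have := count_monotone D ht.1.le
    exact ⟨by omega, t, by omega, rfl, by omega⟩
  · simp only [mem_coe, mem_filter, mem_range] at ht ht'
    replace htt' : t - count D t = t' - count D t' := htt'
    by_contra hne
    rcases Nat.lt_or_gt_of_ne hne with hlt | hlt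
    · exact (sub_count_lt_sub_count ht.2.1 hlt).ne htt'
    · exact (sub_count_lt_sub_count ht'.2.1 hlt).ne htt'.symm
  · simp only [mem_coe, mem_filter, mem_range] at hi
    obtain ⟨-, ℓ, hℓ, hℓi, hiℓ⟩ := hi
    have hℓn := count_monotone D (show ℓ ≤ 2 * n by omega)
    set t := Nat.findGreatest (fun t => t - count D t = i) (2 * n)
    have hit : t - count D t = i :=
      Nat.findGreatest_spec (P := fun t => t - count D t = i) (show ℓ ≤ 2 * n by omega) hℓi
    have hℓt : ℓ ≤ t := Nat.le_findGreatest (show ℓ ≤ 2 * n by omega) hℓi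
    have htn : t < 2 * n := by
      refine lt_of_le_of_ne (Nat.findGreatest_le _) fun ht => ?_
      rw [ht, h] at hit
      omega
    have hnext : ¬(t + 1 - count D (t + 1) = i) :=
      Nat.findGreatest_is_greatest (P := fun t => t - count D t = i) (Nat.lt_succ_self t) htn
    have hasc : ¬D t := fun hD => hnext (by rw [sub_count_succ, if_pos hD, hit, add_zero])
    have := count_monotone D hℓt
    refine ⟨t, ?_, hit⟩
    simp only [mem_coe, mem_filter, mem_range, height_neg_iff]
    exact ⟨htn, hasc, by omega⟩

/-- Every excursion below the diagonal is entered by a north step and left by an east step. -/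
theorem count_ascents_below_eq_count_descents_below {L : ℕ} (h : height D L = 0) :
    count (fun t => ¬D t ∧ height D t < 0) L =
      count (fun t => D t ∧ height D (t + 1) < 0) L := by
  have hinv : ∀ m, (count (fun t => ¬D t ∧ height D t < 0) m : ℤ) -
      count (fun t => D t ∧ height D (t + 1) < 0) m = min (height D m) 0 := by
    intro m
    induction m with
    | zero => simp [height]
    | succ m ih =>
      rw [count_succ, count_succ, height_succ m]
      by_cases hD : D m <;>
        simp only [hD, true_and, false_and, not_true, not_false_eq_true, if_true, if_false] <;>
        split_ifs <;> push_cast <;> omega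
  have := hinv L
  rw [h] at this
  omega

end LatticePath

section CycleLemma

variable {D : ℕ → Prop} [DecidablePred D] {n k : ℕ}

def potential (D : ℕ → Prop) [DecidablePred D] (n k : ℕ) : ℤ :=
  (2 * n + 1) * height D k - height D (2 * n + 1) * k

/-- Cutting the cyclic word `D` of length `2n+1` at `k` deletes its letter at `k + 2n ≡ k - 1`;
the cut is good when that letter has the sign of the total height. -/
def IsGoodCut (D : ℕ → Prop) [DecidablePred D] (n k : ℕ) : Prop :=
  (D (k + 2 * n) ↔ height D (2 * n + 1) < 0)

instance : DecidablePred (IsGoodCut D n) := fun _ => inferInstanceAs (Decidable (_ ↔ _))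

def cutRank (D : ℕ → Prop) [DecidablePred D] (n k : ℕ) : ℕ :=
  count (fun k' => IsGoodCut D n k' ∧ potential D n k' < potential D n k) (2 * n + 1)

theorem potential_add (k t : ℕ) :
    potential D n (k + t) = potential D n k + (2 * n + 1) * height (fun i => D (k + i)) t -
      height D (2 * n + 1) * t := by
  simp only [potential, height_add]
  push_cast
  ring

theorem potential_periodic (hP : Periodic D (2 * n + 1)) : Periodic (potential D n) (2 * n + 1) :=
  fun k => by
    rw [potential_add, height_shift_of_periodic hP]
    push_cast
    ring

theorem isGoodCut_periodic (hP : Periodic D (2 * n + 1)) : Periodic (IsGoodCut D n) (2 * n + 1) :=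
  fun k => by simp only [IsGoodCut, add_right_comm k, hP _]

theorem potential_injOn (hσ : height D (2 * n + 1) = 1 ∨ height D (2 * n + 1) = -1) {a b : ℕ}
    (ha : a < 2 * n + 1) (hb : b < 2 * n + 1) (h : potential D n a = potential D n b) :
    a = b := by
  unfold potential at h
  have hdvd : ((2 * n + 1 : ℕ) : ℤ) ∣ (a : ℤ) - b := by
    rcases hσ with hσ | hσ <;> rw [hσ] at h
    · exact ⟨height D a - height D b, by push_cast; linarith⟩
    · exact ⟨height D b - height D a, by push_cast; linarith⟩
  have := Int.eq_zero_of_abs_lt_dvd hdvd (by rw [abs_lt]; omega)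
  omega

theorem count_isGoodCut (hP : Periodic D (2 * n + 1))
    (hσ : height D (2 * n + 1) = 1 ∨ height D (2 * n + 1) = -1) :
    count (IsGoodCut D n) (2 * n + 1) = n + 1 := by
  have hshift := Periodic.count_add_left (p := fun u => D u ↔ height D (2 * n + 1) < 0)
    (M := 2 * n + 1) (fun u => by simp only [hP u]) (2 * n)
  have hcount := count_not_add_count (p := D) (2 * n + 1)
  have hheight : height D (2 * n + 1) = 2 * n + 1 - 2 * count D (2 * n + 1) := by
    simp only [height]
    push_cast
    ring
  rw [count_congr_of_lt fun k _ => by rw [IsGoodCut, add_comm], hshift]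
  rcases hσ with hσ | hσ
  · rw [count_congr_of_lt (q := fun u => ¬D u) fun u _ => by simp only [hσ]; norm_num]
    omega
  · rw [count_congr_of_lt (q := D) fun u _ => by simp only [hσ]; norm_num]
    omega

theorem cutRank_eq_count_steps (hP : Periodic D (2 * n + 1)) :
    cutRank D n k = count (fun t => (D (k + t) ↔ height D (2 * n + 1) < 0) ∧
      (2 * n + 1) * height (fun i => D (k + i)) (t + 1) - height D (2 * n + 1) * (t + 1) < 0)
      (2 * n) := by
  have hQ : Periodic (fun k' => IsGoodCut D n k' ∧ potential D n k' < potential D n k)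
      (2 * n + 1) := fun k' => by
    simp only [isGoodCut_periodic hP k', potential_periodic hP k']
  rw [cutRank, ← hQ.count_add_left (k + 1), count_succ]
  have hlast : ¬potential D n (k + 1 + 2 * n) < potential D n k := by
    rw [show k + 1 + 2 * n = k + (2 * n + 1) by ring, potential_periodic hP k]
    exact lt_irrefl _
  rw [if_neg fun h => hlast h.2, add_zero]
  refine count_congr_of_lt fun t _ => ?_
  rw [IsGoodCut, show k + 1 + t + 2 * n = k + t + (2 * n + 1) by ring, hP,
    show k + 1 + t = k + (t + 1) by ring, potential_add]
  push_cast
  constructor <;> rintro ⟨h1, h2⟩ <;> exact ⟨h1, by linarith⟩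

/-- The cycle lemma. By `potential_add`, the cut after step `t` of the word read from `k` has
smaller potential than `k` exactly when the path is below the diagonal there. -/
theorem count_ascents_below_eq_cutRank (hP : Periodic D (2 * n + 1))
    (hσ : height D (2 * n + 1) = 1 ∨ height D (2 * n + 1) = -1) (hk : IsGoodCut D n k) :
    count (fun t => ¬D (k + t) ∧ height (fun i => D (k + i)) t < 0) (2 * n) =
      cutRank D n k := by
  rw [cutRank_eq_count_steps hP]
  rcases hσ with hσ | hσ
  · refine count_congr_of_lt fun t ht => ?_
    simp only [hσ, show ¬(1 : ℤ) < 0 by norm_num, iff_false, and_congr_right_iff]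
    intro hD
    rw [height_succ, if_neg hD, ← Int.mul_add_neg_iff_of_pos_of_lt (M := 2 * n + 1)
      (s := 2 * n + 1 - (t + 1)) (h := height (fun i => D (k + i)) t) (by omega) (by omega)]
    constructor <;> intro h <;> linarith
  · have hE : height (fun i => D (k + i)) (2 * n) = 0 := by
      have h1 := height_shift_of_periodic hP k
      rw [height_succ, if_pos (by rw [IsGoodCut, hσ] at hk; simpa using hk), hσ] at h1
      linarith
    rw [count_ascents_below_eq_count_descents_below hE]
    refine count_congr_of_lt fun t ht => ?_
    simp only [hσ, show (-1 : ℤ) < 0 by norm_num, iff_true, and_congr_right_iff]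
    intro _
    rw [← Int.mul_add_neg_iff_of_pos_of_lt (M := 2 * n + 1) (s := t + 1)
      (h := height (fun i => D (k + i)) (t + 1)) (by omega) (by omega)]
    constructor <;> intro h <;> linarith

end CycleLemma

section CutRank

variable {D : ℕ → Prop} [DecidablePred D] {n k : ℕ}

theorem cutRank_eq_card : cutRank D n k = #{k' ∈ {k' ∈ range (2 * n + 1) | IsGoodCut D n k'} |
    potential D n k' < potential D n k} := by
  rw [cutRank, count_eq_card_filter_range, filter_filter]

theorem card_filter_isGoodCut (hP : Periodic D (2 * n + 1))
    (hσ : height D (2 * n + 1) = 1 ∨ height D (2 * n + 1) = -1) :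
    #{k ∈ range (2 * n + 1) | IsGoodCut D n k} = n + 1 := by
  rw [← count_eq_card_filter_range, count_isGoodCut hP hσ]

theorem cutRank_lt (hP : Periodic D (2 * n + 1))
    (hσ : height D (2 * n + 1) = 1 ∨ height D (2 * n + 1) = -1) (hk : IsGoodCut D n k)
    (hkn : k < 2 * n + 1) : cutRank D n k < n + 1 := by
  rw [cutRank_eq_card, ← card_filter_isGoodCut hP hσ]
  exact card_filter_lt_lt_card (by simp [hk, hkn])

theorem exists_isGoodCut_cutRank_eq (hP : Periodic D (2 * n + 1))
    (hσ : height D (2 * n + 1) = 1 ∨ height D (2 * n + 1) = -1) {j : ℕ} (hj : j ≤ n) :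
    ∃ k < 2 * n + 1, IsGoodCut D n k ∧ cutRank D n k = j := by
  have hinj : Set.InjOn (potential D n)
      ({k ∈ range (2 * n + 1) | IsGoodCut D n k} : Finset ℕ) :=
    fun a ha b hb => by
      simp only [coe_filter, mem_range, Set.mem_ofPred_eq] at ha hb
      exact potential_injOn hσ ha.1 hb.1
  obtain ⟨k, hk, hkj⟩ := exists_card_filter_lt_eq hinj (j := j)
    (by rw [card_filter_isGoodCut hP hσ]; omega)
  simp only [mem_filter, mem_range] at hk
  exact ⟨k, hk.1, hk.2, by rw [cutRank_eq_card]; exact hkj⟩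

theorem eq_of_cutRank_eq (hσ : height D (2 * n + 1) = 1 ∨ height D (2 * n + 1) = -1)
    {a b : ℕ} (ha : a < 2 * n + 1) (hb : b < 2 * n + 1) (hga : IsGoodCut D n a)
    (hgb : IsGoodCut D n b) (h : cutRank D n a = cutRank D n b) : a = b := by
  rw [cutRank_eq_card, cutRank_eq_card] at h
  exact potential_injOn hσ ha hb
    (eq_of_card_filter_lt_eq (by simp [ha, hga]) (by simp [hb, hgb]) h)

end CutRank

section Rotation

open Equiv Fin.NatCast

variable {N : ℕ} [NeZero N]

def cyclicDescentAt (w : Perm (Fin N)) (u : ℕ) : Prop := w ((u : Fin N) + 1) < w u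

instance (w : Perm (Fin N)) : DecidablePred (cyclicDescentAt w) :=
  fun _ => inferInstanceAs (Decidable (_ < _))

def rotate (k : Fin N) (w : Perm (Fin N)) : Perm (Fin N) := w * Equiv.addRight k

theorem rotate_apply (k : Fin N) (w : Perm (Fin N)) (x : Fin N) : rotate k w x = w (x + k) :=
  rfl

theorem rotate_zero (w : Perm (Fin N)) : rotate 0 w = w := by
  ext x
  simp [rotate_apply]

theorem rotate_rotate (a b : Fin N) (w : Perm (Fin N)) :
    rotate a (rotate b w) = rotate (a + b) w := by
  ext x
  simp only [rotate_apply, add_assoc]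

theorem rotate_equivalence : Equivalence fun v v' : Perm (Fin N) => ∃ k, v' = rotate k v :=
  ⟨fun v => ⟨0, (rotate_zero v).symm⟩,
    fun ⟨k, hk⟩ => ⟨-k, by rw [hk, rotate_rotate, neg_add_cancel, rotate_zero]⟩,
    fun ⟨a, ha⟩ ⟨b, hb⟩ => ⟨b + a, by rw [hb, ha, rotate_rotate]⟩⟩

theorem cyclicDescentAt_periodic (w : Perm (Fin N)) : Periodic (cyclicDescentAt w) N :=
  fun u => by simp only [cyclicDescentAt, Nat.cast_add, Fin.natCast_self, add_zero]

theorem descentsIn_rotate (k : Fin N) (w : Perm (Fin N)) {ℓ : ℕ} (hℓ : ℓ < N) :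
    descentsIn (rotate k w) ℓ = count (fun i => cyclicDescentAt w (k.val + i)) ℓ := by
  rw [descentsIn, count_eq_card_filter_range]
  refine congrArg card (filter_congr fun i hi => ?_)
  have hi1 : i + 1 < N := by
    rw [mem_range] at hi
    omega
  have hmk : ∀ j (hj : j < N), (⟨j, hj⟩ : Fin N) = (j : Fin N) :=
    fun j hj => Fin.ext (Fin.val_cast_of_lt hj).symm
  simp only [rotate_apply, cyclicDescentAt, hmk, exists_prop, hi1, true_and]
  push_cast
  simp only [add_comm (k : Fin N), add_right_comm _ (1 : Fin N)]

theorem descents_rotate (k : Fin N) (w : Perm (Fin N)) :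
    descents (rotate k w) = count (fun i => cyclicDescentAt w (k.val + i)) (N - 1) :=
  descentsIn_rotate k w (Nat.sub_lt (NeZero.pos N) one_pos)

theorem excPath_rotate {n : ℕ} (k : Fin (2 * n + 1)) (w : Perm (Fin (2 * n + 1))) :
    excPath n (rotate k w) = pathExc n (fun i => cyclicDescentAt w (k.val + i)) := by
  unfold excPath pathExc
  congr 1
  ext i
  simp only [mem_filter]
  refine and_congr_right fun _ => exists_congr fun ℓ => and_congr_right fun hℓ => ?_
  rw [descentsIn_rotate k w (mem_range.1 hℓ)]

end Rotation

section RotationClass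

open Equiv

variable {n : ℕ} {w : Perm (Fin (2 * n + 1))}

theorem count_cyclicDescentAt (hw : descents w = n) : count (cyclicDescentAt w) (2 * n) = n := by
  have h := descents_rotate 0 w
  rw [rotate_zero, hw, Nat.add_sub_cancel] at h
  exact (count_congr_of_lt fun i _ => by rw [Fin.val_zero, zero_add]).trans h.symm

theorem height_cyclicDescentAt (hw : descents w = n) :
    height (cyclicDescentAt w) (2 * n + 1) = 1 ∨ height (cyclicDescentAt w) (2 * n + 1) = -1 := by
  have h := count_succ (cyclicDescentAt w) (2 * n)
  rw [count_cyclicDescentAt hw] at h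
  simp only [height, h]
  split_ifs
  · right; push_cast; ring
  · left; push_cast; ring

theorem descents_rotate_eq_iff (hw : descents w = n) (k : Fin (2 * n + 1)) :
    descents (rotate k w) = n ↔ IsGoodCut (cyclicDescentAt w) n k := by
  have h0 := count_cyclicDescentAt hw
  have hcyc := count_succ (cyclicDescentAt w) (2 * n)
  have hcut := count_succ (fun i => cyclicDescentAt w (k.val + i)) (2 * n)
  rw [(cyclicDescentAt_periodic w).count_add_left] at hcut
  rw [descents_rotate, Nat.add_sub_cancel, IsGoodCut, height_neg_iff]
  by_cases hD : cyclicDescentAt w (k.val + 2 * n) <;> by_cases hD0 : cyclicDescentAt w (2 * n) <;>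
    simp only [hD, hD0, if_true, if_false] at hcut hcyc <;>
    simp only [hD, true_iff, false_iff, not_lt] <;> omega

theorem excPath_rotate_eq_cutRank (hw : descents w = n) {k : Fin (2 * n + 1)}
    (hk : descents (rotate k w) = n) :
    excPath n (rotate k w) = cutRank (cyclicDescentAt w) n k := by
  have hcount := hk
  rw [descents_rotate, Nat.add_sub_cancel] at hcount
  rw [excPath_rotate, pathExc_eq_count hcount,
    count_ascents_below_eq_cutRank (cyclicDescentAt_periodic w) (height_cyclicDescentAt hw)
      ((descents_rotate_eq_iff hw k).1 hk)]

theorem excPath_lt (hw : descents w = n) : excPath n w < n + 1 := by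
  have h0 : descents (rotate 0 w) = n := by rwa [rotate_zero]
  have h := excPath_rotate_eq_cutRank hw h0
  rw [rotate_zero] at h
  rw [h]
  exact cutRank_lt (cyclicDescentAt_periodic w) (height_cyclicDescentAt hw)
    ((descents_rotate_eq_iff hw 0).1 h0) (Fin.isLt _)

theorem exists_rotate_excPath_eq (hw : descents w = n) {j : ℕ} (hj : j ≤ n) :
    ∃ k, descents (rotate k w) = n ∧ excPath n (rotate k w) = j := by
  obtain ⟨k, hk, hgood, hrank⟩ :=
    exists_isGoodCut_cutRank_eq (cyclicDescentAt_periodic w) (height_cyclicDescentAt hw) hj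
  have hd : descents (rotate ⟨k, hk⟩ w) = n := (descents_rotate_eq_iff hw _).2 hgood
  exact ⟨⟨k, hk⟩, hd, by rw [excPath_rotate_eq_cutRank hw hd, hrank]⟩

theorem rotate_eq_self_of_excPath_eq (hw : descents w = n) {k : Fin (2 * n + 1)}
    (hk : descents (rotate k w) = n) (h : excPath n (rotate k w) = excPath n w) :
    rotate k w = w := by
  have h0 : descents (rotate 0 w) = n := by rwa [rotate_zero]
  have hval : k.val = (0 : Fin (2 * n + 1)).val := by
    refine eq_of_cutRank_eq (height_cyclicDescentAt hw) k.isLt (Fin.isLt _)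
      ((descents_rotate_eq_iff hw k).1 hk) ((descents_rotate_eq_iff hw 0).1 h0) ?_
    rw [← excPath_rotate_eq_cutRank hw hk, ← excPath_rotate_eq_cutRank hw h0, rotate_zero, h]
  rw [Fin.ext hval, rotate_zero]

end RotationClass

end EulerianCatalan

open EulerianCatalan

theorem card_perm_exc_eq_eulerianCatalan_general (n j : ℕ) (hj : j ≤ n) :
    (Finset.univ.filter (fun w : Equiv.Perm (Fin (2 * n + 1)) =>
        descents w = n ∧ excPath n w = j)).card
      = eulerian n (2 * n + 1) / (n + 1) := by
  have key := card_eq_card_mul_card_filter_of_existsUnique rotate_equivalence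
    (s := univ.filter fun w : Equiv.Perm (Fin (2 * n + 1)) => descents w = n)
    (t := range (n + 1)) (f := excPath n)
    (fun w hw => mem_range.2 (excPath_lt (mem_filter.1 hw).2))
    (fun w hw i hi => by
      obtain ⟨k, hd, he⟩ :=
        exists_rotate_excPath_eq (mem_filter.1 hw).2 (mem_range_succ_iff.1 hi)
      exact ⟨rotate k w, by simp [hd], ⟨k, rfl⟩, he⟩)
    (fun v hv v' hv' ⟨k, hk⟩ h => by
      subst hk
      exact (rotate_eq_self_of_excPath_eq (mem_filter.1 hv).2 (mem_filter.1 hv').2 h.symm).symm)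
    (mem_range_succ_iff.2 hj)
  rw [card_range, filter_filter] at key
  rw [eulerian, key, Nat.mul_div_cancel_left _ n.succ_pos]

/-- The number of permutations `w ∈ S_{2n+1}` with `n` descents whose lattice
path has exactly `j` exceedances is independent of `j ∈ {0,…,n}`, being
equal to the Eulerian-Catalan number `A(n,2n+1)/(n+1)`. -/
theorem card_perm_exc_eq_eulerianCatalan (n j : ℕ) (hn : 1 ≤ n) (hj : j ≤ n) :
    (Finset.univ.filter (fun w : Equiv.Perm (Fin (2 * n + 1)) =>
        descents w = n ∧ excPath n w = j)).card
      = eulerian n (2 * n + 1) / (n + 1) :=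
  card_perm_exc_eq_eulerianCatalan_general n j hj
end

section
/- For a permutation W = w_1...w_{2n+1} of [2n+1] with exactly n descents, among the 2n+1 cyclic shifts of W, exactly n+1 have exactly n descents (the rest having n-1 or n+1 descents, depending on whether the cyclic word has n or n+1 cyclic descents). -/
/-!
Reading the cyclic word from position `k`, the linear descents of the shift are exactly the cyclic
descents of `w` except the one at the seam `k - 1`. So the shift has `cyclicDescents w - 1`
descents if `k - 1` is a cyclic descent and `cyclicDescents w` descents otherwise. For `k = 0` this
gives `cyclicDescents w ∈ {n, n + 1}`; the shifts with `n` descents are then the `2n + 1 - n`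
seams that are not cyclic descents, resp. the `n + 1` seams that are.
-/

open scoped Classical

/-- The number of cyclic descents of `w ∈ S_N`: positions `i` (mod `N`)
with `w i > w (i+1)`. -/
noncomputable def cyclicDescents {N : ℕ} [NeZero N] (w : Equiv.Perm (Fin N)) : ℕ :=
  (Finset.univ.filter (fun i : Fin N => w (i + 1) < w i)).card

/-- The cyclic shift of `w` starting at position `k`: `i ↦ w (i + k)`. -/
noncomputable def cyclicShift {N : ℕ} [NeZero N] (w : Equiv.Perm (Fin N)) (k : Fin N) :
    Equiv.Perm (Fin N) :=
  (Equiv.addRight k).trans w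

open Finset

section

variable {M : ℕ} (w : Equiv.Perm (Fin (M + 1)))

lemma descents_eq_card_filter_ne_last :
    descents w = #{j : Fin (M + 1) | j ≠ Fin.last M ∧ w (j + 1) < w j} := by
  have succ_eq {j : Fin (M + 1)} (hj : j ≠ Fin.last M) :
      j + 1 = ⟨j + 1, Nat.succ_lt_succ (Fin.val_lt_last hj)⟩ :=
    Fin.ext (Fin.val_add_one_of_lt (Fin.lt_last_iff_ne_last.2 hj))
  unfold descents descentsIn
  rw [Nat.add_sub_cancel]
  symm
  refine card_bij' (fun j _ => j.val) (fun i hi => ⟨i, ?_⟩) ?_ ?_ (fun _ _ => rfl) (fun _ _ => rfl)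
  · simp only [mem_filter, mem_range] at hi; omega
  · intro j hj
    simp only [mem_filter, mem_univ, true_and, mem_range] at hj ⊢
    obtain ⟨hj, hlt⟩ := hj
    have := Fin.val_lt_last hj
    rw [succ_eq hj] at hlt
    exact ⟨this, by omega, hlt⟩
  · intro i hi
    simp only [mem_filter, mem_univ, true_and, mem_range] at hi ⊢
    obtain ⟨hi, _, hlt⟩ := hi
    have hne : (⟨i, by omega⟩ : Fin (M + 1)) ≠ Fin.last M := Fin.ne_of_val_ne (by simp; omega)
    rw [succ_eq hne]
    exact ⟨hne, hlt⟩

lemma cyclicShift_apply (k j : Fin (M + 1)) : cyclicShift w k j = w (j + k) := rfl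

lemma cyclicShift_zero : cyclicShift w 0 = w := by
  ext j
  simp [cyclicShift_apply]

lemma descents_cyclicShift (k : Fin (M + 1)) :
    descents (cyclicShift w k) = #{m : Fin (M + 1) | m ≠ k - 1 ∧ w (m + 1) < w m} := by
  have last_eq : Fin.last M = -1 := eq_neg_of_add_eq_zero_left (Fin.last_add_one M)
  rw [descents_eq_card_filter_ne_last]
  refine card_equiv (Equiv.addRight k) fun j => ?_
  simp only [mem_filter, mem_univ, true_and, Equiv.coe_addRight, cyclicShift_apply,
    add_right_comm j 1 k, last_eq, sub_eq_neg_add k, ne_eq, add_left_inj]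

lemma cyclicDescents_eq_descents_cyclicShift_add (k : Fin (M + 1)) :
    cyclicDescents w = descents (cyclicShift w k) + if w k < w (k - 1) then 1 else 0 := by
  have erase_eq : ({m | m ≠ k - 1 ∧ w (m + 1) < w m} : Finset (Fin (M + 1))) =
      ({m | w (m + 1) < w m} : Finset (Fin (M + 1))).erase (k - 1) := by
    ext m
    simp
  rw [descents_cyclicShift, erase_eq, cyclicDescents]
  split_ifs with h
  · exact (card_erase_add_one (by simpa using h)).symm
  · rw [erase_eq_of_notMem (by simpa using h), add_zero]

lemma card_filter_lt_sub_one_eq_cyclicDescents :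
    #{k : Fin (M + 1) | w k < w (k - 1)} = cyclicDescents w :=
  card_equiv (Equiv.subRight 1) fun k => by simp

lemma descents_cyclicShift_eq_cyclicDescents_iff (k : Fin (M + 1)) :
    descents (cyclicShift w k) = cyclicDescents w ↔ ¬ w k < w (k - 1) := by
  have := cyclicDescents_eq_descents_cyclicShift_add w k
  split_ifs at this with h <;> simp only [h, not_true, not_false_iff, iff_true, iff_false] <;> omega

lemma descents_cyclicShift_add_one_eq_cyclicDescents_iff (k : Fin (M + 1)) :
    descents (cyclicShift w k) + 1 = cyclicDescents w ↔ w k < w (k - 1) := by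
  have := cyclicDescents_eq_descents_cyclicShift_add w k
  split_ifs at this with h <;> simp only [h, iff_true, iff_false] <;> omega

lemma descents_cyclicShift_eq_or_add_one_eq (k : Fin (M + 1)) :
    descents (cyclicShift w k) = cyclicDescents w ∨
      descents (cyclicShift w k) + 1 = cyclicDescents w :=
  (em (w k < w (k - 1))).symm.imp
    (descents_cyclicShift_eq_cyclicDescents_iff w k).2
    (descents_cyclicShift_add_one_eq_cyclicDescents_iff w k).2

lemma card_filter_descents_cyclicShift_eq_cyclicDescents :
    #{k : Fin (M + 1) | descents (cyclicShift w k) = cyclicDescents w} =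
      M + 1 - cyclicDescents w := by
  have := card_filter_add_card_filter_not (s := univ) fun k : Fin (M + 1) => w k < w (k - 1)
  rw [card_filter_lt_sub_one_eq_cyclicDescents, card_univ, Fintype.card_fin] at this
  simp_rw [descents_cyclicShift_eq_cyclicDescents_iff]
  omega

lemma card_filter_descents_cyclicShift_add_one_eq_cyclicDescents :
    #{k : Fin (M + 1) | descents (cyclicShift w k) + 1 = cyclicDescents w} =
      cyclicDescents w := by
  simp_rw [descents_cyclicShift_add_one_eq_cyclicDescents_iff]
  exact card_filter_lt_sub_one_eq_cyclicDescents w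

end

theorem card_cyclicShifts_with_n_descents_general (n : ℕ)
    (w : Equiv.Perm (Fin (2 * n + 1))) (hw : descents w = n) :
    (Finset.univ.filter (fun k : Fin (2 * n + 1) =>
        descents (cyclicShift w k) = n)).card = n + 1 ∧
    (cyclicDescents w = n →
      ∀ k, descents (cyclicShift w k) = n ∨ descents (cyclicShift w k) = n - 1) ∧
    (cyclicDescents w = n + 1 →
      ∀ k, descents (cyclicShift w k) = n ∨ descents (cyclicShift w k) = n + 1) := by
  refine ⟨?_, fun hc k => ?_, fun hc k => ?_⟩
  · rcases descents_cyclicShift_eq_or_add_one_eq w 0 with hc | hc <;>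
      rw [cyclicShift_zero, hw] at hc
    · have := card_filter_descents_cyclicShift_eq_cyclicDescents w
      rw [← hc] at this
      omega
    · simpa only [← hc, Nat.add_right_cancel_iff] using
        card_filter_descents_cyclicShift_add_one_eq_cyclicDescents w
  all_goals rcases descents_cyclicShift_eq_or_add_one_eq w k with h | h <;> omega

/-- Among the `2n+1` cyclic shifts of a permutation `W ∈ S_{2n+1}` with
exactly `n` descents, exactly `n+1` have exactly `n` descents; the remaining
shifts all have `n-1` descents if the cyclic word has `n` cyclic descents,
and all have `n+1` descents if the cyclic word has `n+1` cyclic descents. -/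
theorem card_cyclicShifts_with_n_descents (n : ℕ) (hn : 1 ≤ n)
    (w : Equiv.Perm (Fin (2 * n + 1))) (hw : descents w = n) :
    (Finset.univ.filter (fun k : Fin (2 * n + 1) =>
        descents (cyclicShift w k) = n)).card = n + 1 ∧
    (cyclicDescents w = n →
      ∀ k, descents (cyclicShift w k) = n ∨ descents (cyclicShift w k) = n - 1) ∧
    (cyclicDescents w = n + 1 →
      ∀ k, descents (cyclicShift w k) = n ∨ descents (cyclicShift w k) = n + 1) :=
  card_cyclicShifts_with_n_descents_general n w hw
end

section
/- Let v_0,...,v_n ∈ ℝ^{n+1} be vectors spanning a hyperplane H with v_0 + ... + v_n = 0 such that any n of them are linearly independent. Then H is the union of the n+1 simplicial cones generated by the subsets {v_0,...,v_n} \ {v_i}, i = 0,...,n, and these cones have pairwise disjoint interiors relative to H. -/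
/-- The cone of nonnegative combinations of the vectors `v_j`, `j ≠ i`. -/
def coneGen {n : ℕ} (v : Fin (n + 1) → (Fin (n + 1) → ℝ)) (i : Fin (n + 1)) :
    Set (Fin (n + 1) → ℝ) :=
  {y | ∃ c : Fin (n + 1) → ℝ, (∀ j, 0 ≤ c j) ∧ c i = 0 ∧ y = ∑ j, c j • v j}

/-!
Since `∑ v_j = 0`, shifting all coefficients of a combination `∑ c_j v_j` by a constant does not
change it; shifting by `min c` puts every point of `H` into some cone `C_i`. The vectors `v_j`,
`j ≠ i`, form a basis of `H`, and comparing coefficients shows that `C_i ∩ C_j` lies in the span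
of the `v_k`, `k ≠ i, j`. A point in the relative interiors of both `C_i` and `C_j` could be moved
inside `C_i ∩ C_j` in every direction of `H`, so this proper subspace would contain `H`.
-/

open Filter Topology

section IntrinsicInterior

variable {𝕜 E : Type*} [AddCommGroup E] [TopologicalSpace E] [ContinuousAdd E]

lemma eventually_add_smul_mem_of_mem_intrinsicInterior [Ring 𝕜] [TopologicalSpace 𝕜]
    [Module 𝕜 E] [ContinuousSMul 𝕜 E] {s : Set E} {x h : E}
    (hx : x ∈ intrinsicInterior 𝕜 s) (hh : h ∈ vectorSpan 𝕜 s) :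
    ∀ᶠ t : 𝕜 in 𝓝 0, x + t • h ∈ s := by
  obtain ⟨y, hy, rfl⟩ := mem_intrinsicInterior.1 hx
  have hline : ∀ t : 𝕜, (y : E) + t • h ∈ affineSpan 𝕜 s := fun t => by
    rw [add_comm]
    exact AffineSubspace.vadd_mem_of_mem_direction
      (by rw [direction_affineSpan]; exact Submodule.smul_mem _ _ hh) y.2
  let f : 𝕜 → affineSpan 𝕜 s := fun t => ⟨y + t • h, hline t⟩
  have hf : Continuous f := by fun_prop
  have hf0 : f 0 = y := by simp [f]
  exact hf.continuousAt.eventually_mem (hf0 ▸ mem_interior_iff_mem_nhds.1 hy)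

lemma vectorSpan_inf_le_of_inter_subset [NontriviallyNormedField 𝕜] [Module 𝕜 E]
    [ContinuousSMul 𝕜 E] {s t : Set E} {W : Submodule 𝕜 E} (hst : s ∩ t ⊆ W) {x : E}
    (hs : x ∈ intrinsicInterior 𝕜 s) (ht : x ∈ intrinsicInterior 𝕜 t) :
    vectorSpan 𝕜 s ⊓ vectorSpan 𝕜 t ≤ W := by
  rintro h ⟨hhs, hht⟩
  have hxW : x ∈ W := hst ⟨intrinsicInterior_subset hs, intrinsicInterior_subset ht⟩
  obtain ⟨r, ⟨hrs, hrt⟩, hr⟩ :=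
    (((eventually_add_smul_mem_of_mem_intrinsicInterior hs hhs).and
      (eventually_add_smul_mem_of_mem_intrinsicInterior ht hht)).filter_mono
        nhdsWithin_le_nhds |>.and self_mem_nhdsWithin).exists (f := 𝓝[≠] (0 : 𝕜))
  have hrh : r • h ∈ W := by simpa using W.sub_mem (hst ⟨hrs, hrt⟩) hxW
  exact (W.smul_mem_iff hr).1 hrh

end IntrinsicInterior

section Combinations

variable {ι R M : Type*} [Fintype ι] [Ring R] [AddCommGroup M] [Module R M] {v : ι → M}

lemma sum_sub_const_smul_eq (hsum : ∑ j, v j = 0) (c : ι → R) (r : R) :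
    ∑ j, (c j - r) • v j = ∑ j, c j • v j := by
  simp only [sub_smul, Finset.sum_sub_distrib, ← Finset.smul_sum, hsum, smul_zero, sub_zero]

lemma eq_zero_of_sum_smul_eq_zero_of_apply_eq_zero {i : ι}
    (hv : LinearIndependent R (fun j : {j // j ≠ i} => v j)) {g : ι → R}
    (hg : ∑ j, g j • v j = 0) (hgi : g i = 0) : g = 0 := by
  classical
  rw [Fintype.sum_eq_add_sum_subtype_ne _ i, hgi, zero_smul, zero_add] at hg
  funext k
  by_cases hk : k = i
  · rw [hk, hgi, Pi.zero_apply]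
  · exact Fintype.linearIndependent_iff.1 hv (fun j => g j) hg ⟨k, hk⟩

lemma span_image_compl_singleton_eq (hsum : ∑ j, v j = 0) (i : ι) :
    Submodule.span R (v '' {i}ᶜ) = Submodule.span R (Set.range v) := by
  classical
  refine le_antisymm (Submodule.span_mono (Set.image_subset_range _ _)) ?_
  rw [Submodule.span_le]
  rintro _ ⟨k, rfl⟩
  by_cases hk : k = i
  · rw [Fintype.sum_eq_add_sum_subtype_ne _ i, add_eq_zero_iff_eq_neg] at hsum
    rw [hk, SetLike.mem_coe, hsum]
    exact Submodule.neg_mem _ <| Submodule.sum_mem _ fun j _ =>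
      Submodule.subset_span ⟨j, j.2, rfl⟩
  · exact Submodule.subset_span ⟨k, hk, rfl⟩

end Combinations

section coneGen

variable {n : ℕ} {v : Fin (n + 1) → (Fin (n + 1) → ℝ)}

lemma zero_mem_coneGen (i : Fin (n + 1)) : 0 ∈ coneGen v i :=
  ⟨0, fun _ => le_rfl, rfl, by simp⟩

lemma image_compl_singleton_subset_coneGen (i : Fin (n + 1)) : v '' {i}ᶜ ⊆ coneGen v i := by
  rintro _ ⟨k, hk, rfl⟩
  refine ⟨Pi.single k 1, fun j => ?_, Pi.single_eq_of_ne (Ne.symm hk) _, ?_⟩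
  · by_cases hj : j = k <;> simp [hj]
  · simp [Pi.single_apply, ite_smul]

lemma coneGen_subset_span (i : Fin (n + 1)) :
    coneGen v i ⊆ Submodule.span ℝ (Set.range v) := by
  rintro _ ⟨c, -, -, rfl⟩
  exact Submodule.sum_mem _ fun k _ => Submodule.smul_mem _ _ (Submodule.subset_span ⟨k, rfl⟩)

lemma exists_mem_coneGen_of_mem_span (hsum : ∑ j, v j = 0) {x : Fin (n + 1) → ℝ}
    (hx : x ∈ Submodule.span ℝ (Set.range v)) : ∃ i, x ∈ coneGen v i := by
  obtain ⟨c, rfl⟩ := (Submodule.mem_span_range_iff_exists_fun ℝ).1 hx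
  obtain ⟨i, -, hmin⟩ := Finset.exists_min_image Finset.univ c Finset.univ_nonempty
  exact ⟨i, fun k => c k - c i, fun k => sub_nonneg.2 (hmin k (Finset.mem_univ k)), sub_self _,
    (sum_sub_const_smul_eq hsum c (c i)).symm⟩

lemma span_le_vectorSpan_coneGen (hsum : ∑ j, v j = 0) (i : Fin (n + 1)) :
    Submodule.span ℝ (Set.range v) ≤ vectorSpan ℝ (coneGen v i) := by
  rw [vectorSpan_eq_span_vsub_set_right ℝ (zero_mem_coneGen i), ←
    span_image_compl_singleton_eq hsum i]
  refine Submodule.span_mono fun y hy => ⟨y, image_compl_singleton_subset_coneGen i hy, ?_⟩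
  simp

/-- After shifting `b` by `b i`, both coefficient vectors vanish at `i` and hence agree; at `j`
this reads `a j = -b i`, which forces `a j = 0` since `a j, b i ≥ 0`. -/
lemma coneGen_inter_subset_span (hsum : ∑ j, v j = 0) {i j : Fin (n + 1)}
    (hind : LinearIndependent ℝ (fun k : {k : Fin (n + 1) // k ≠ i} => v k)) (hij : i ≠ j) :
    coneGen v i ∩ coneGen v j ⊆ Submodule.span ℝ (v '' ({i}ᶜ \ {j})) := by
  rintro _ ⟨⟨a, ha, hai, rfl⟩, ⟨b, hb, hbj, hab⟩⟩
  have hdiff : (fun k => a k - (b k - b i)) = 0 := by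
    refine eq_zero_of_sum_smul_eq_zero_of_apply_eq_zero hind ?_ (by simp [hai])
    rw [← sum_sub_const_smul_eq hsum b (b i), ← sub_eq_zero, ← Finset.sum_sub_distrib] at hab
    simpa only [← sub_smul] using hab
  have haj : a j = 0 := by
    have := congrFun hdiff j
    simp only [hbj, Pi.zero_apply] at this
    linarith [ha j, hb i]
  refine Submodule.sum_mem _ fun k _ => ?_
  rcases eq_or_ne k i with rfl | hki
  · simp [hai]
  rcases eq_or_ne k j with rfl | hkj
  · simp [haj]
  exact Submodule.smul_mem _ _ (Submodule.subset_span ⟨k, ⟨hki, hkj⟩, rfl⟩)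

end coneGen

/-- Let `v_0, …, v_n ∈ ℝ^{n+1}` with `v_0 + ⋯ + v_n = 0` be such that any `n`
of them are linearly independent, and let `H` be their linear span (a
hyperplane). Then `H` is the union of the `n+1` simplicial cones generated by
the subsets `{v_0,…,v_n} \ {v_i}`, and these cones have pairwise disjoint
interiors relative to `H`. -/
theorem span_eq_union_simplicial_cones (n : ℕ)
    (v : Fin (n + 1) → (Fin (n + 1) → ℝ))
    (hsum : ∑ j, v j = 0)
    (hind : ∀ i : Fin (n + 1),
      LinearIndependent ℝ (fun j : {j : Fin (n + 1) // j ≠ i} => v j)) :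
    (⋃ i : Fin (n + 1), coneGen v i)
        = (Submodule.span ℝ (Set.range v) : Submodule ℝ (Fin (n + 1) → ℝ)) ∧
    Pairwise (fun i j : Fin (n + 1) =>
      Disjoint (intrinsicInterior ℝ (coneGen v i)) (intrinsicInterior ℝ (coneGen v j))) := by
  refine ⟨(Set.iUnion_subset coneGen_subset_span).antisymm fun x hx =>
    Set.mem_iUnion.2 (exists_mem_coneGen_of_mem_span hsum hx), fun i j hij => ?_⟩
  refine Set.disjoint_left.2 fun x hxi hxj => ?_
  have hH : Submodule.span ℝ (Set.range v) ≤ Submodule.span ℝ (v '' ({i}ᶜ \ {j})) :=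
    le_inf (span_le_vectorSpan_coneGen hsum i) (span_le_vectorSpan_coneGen hsum j) |>.trans
      (vectorSpan_inf_le_of_inter_subset (coneGen_inter_subset_span hsum (hind i) hij) hxi hxj)
  exact LinearIndepOn.notMem_span (hind i) (Ne.symm hij)
    (hH (Submodule.subset_span ⟨j, rfl⟩))
end

section
/- If x lies in the interior of P_{k,n,0} (i.e., x ∈ Δ(n+1,k(n+1)) with x_1 + ... + x_{kt} < t for all t = 1,...,n and 0 < x_s < 1 for all s), then x ∉ P_{k,n,i} for any i ∈ {1,...,n}. -/
/-- The coordinate of index `m` taken modulo `N` (for a positive `N`). -/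
def idx (N : ℕ) (hN : 0 < N) (m : ℕ) : Fin N := ⟨m % N, Nat.mod_lt m hN⟩

/-- The hypersimplex `Δ(n+1, k(n+1)) = {x ∈ [0,1]^{k(n+1)} : ∑ x_s = n+1}`
(coordinates 0-indexed). -/
def hypersimplex (k n : ℕ) : Set (Fin (k * (n + 1)) → ℝ) :=
  {x | (∀ s, 0 ≤ x s ∧ x s ≤ 1) ∧ ∑ s, x s = (n : ℝ) + 1}

/-- The polytope `P_{k,n,i} ⊆ Δ(n+1, k(n+1))` cut out by the inequalities
`∑_{s=1}^{kt} x_{ki+s} ≤ t` for `t = 1,…,n`, indices mod `k(n+1)`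
(here 0-indexed: the 1-indexed coordinate `ki+s` is the 0-indexed
coordinate `ki+s-1`). -/
def polyP (k n : ℕ) (hk : 0 < k) (i : ℕ) : Set (Fin (k * (n + 1)) → ℝ) :=
  {x | x ∈ hypersimplex k n ∧
    ∀ t, 1 ≤ t → t ≤ n →
      ∑ s ∈ Finset.range (k * t),
        x (idx (k * (n + 1)) (Nat.mul_pos hk n.succ_pos) (k * i + s)) ≤ (t : ℝ)}

/-!
The cyclic window of length `k(n+1-i)` starting at `ki` is exactly the complement of the
initial segment of length `ki`. On the interior of `P_{k,n,0}` the initial segment has sum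
`< i`, so the window has sum `> n+1-i`, violating the `t = n+1-i` inequality of `P_{k,n,i}`.
-/

section CyclicSum

variable {M : Type*} [AddCommMonoid M] {N : ℕ} (hN : 0 < N)

theorem sum_range_idx (f : Fin N → M) :
    ∑ m ∈ Finset.range N, f (idx N hN m) = ∑ s, f s := by
  rw [← Fin.sum_univ_eq_sum_range]
  exact Finset.sum_congr rfl fun s _ => congrArg f (Fin.ext (Nat.mod_eq_of_lt s.isLt))

theorem sum_range_idx_add_sum_window {a b : ℕ} (hab : a + b = N) (f : Fin N → M) :
    ∑ m ∈ Finset.range a, f (idx N hN m) + ∑ s ∈ Finset.range b, f (idx N hN (a + s)) =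
      ∑ s, f s := by
  rw [← Finset.sum_range_add, hab, sum_range_idx]

end CyclicSum

theorem interior_polyP_zero_disjoint_general (k n : ℕ) (hk : 1 ≤ k)
    (x : Fin (k * (n + 1)) → ℝ)
    (hΔ : x ∈ hypersimplex k n)
    (hstrict : ∀ t, 1 ≤ t → t ≤ n →
      ∑ s ∈ Finset.range (k * t),
        x (idx (k * (n + 1)) (Nat.mul_pos hk n.succ_pos) s) < (t : ℝ)) :
    ∀ i, 1 ≤ i → i ≤ n → x ∉ polyP k n hk i := by
  intro i hi hin hx
  have hprefix := hstrict i hi hin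
  have hwindow := hx.2 (n + 1 - i) (by omega) (by omega)
  have htotal := sum_range_idx_add_sum_window (Nat.mul_pos hk n.succ_pos)
    (a := k * i) (b := k * (n + 1 - i)) (by rw [← Nat.mul_add]; congr 1; omega) x
  have hcast : ((n + 1 - i : ℕ) : ℝ) = n + 1 - i := by
    rw [Nat.cast_sub (by omega)]; push_cast; ring
  rw [hΔ.2] at htotal
  linarith

/-- If `x` lies in the interior of `P_{k,n,0}`, i.e. `x ∈ Δ(n+1, k(n+1))`
with `0 < x_s < 1` for all `s` and `x_1 + ⋯ + x_{kt} < t` for `t = 1,…,n`,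
then `x ∉ P_{k,n,i}` for every `i ∈ {1,…,n}`. -/
theorem interior_polyP_zero_disjoint (k n : ℕ) (hk : 1 ≤ k) (hn : 1 ≤ n)
    (x : Fin (k * (n + 1)) → ℝ)
    (hΔ : x ∈ hypersimplex k n)
    (hstrict01 : ∀ s, 0 < x s ∧ x s < 1)
    (hstrict : ∀ t, 1 ≤ t → t ≤ n →
      ∑ s ∈ Finset.range (k * t),
        x (idx (k * (n + 1)) (Nat.mul_pos hk n.succ_pos) s) < (t : ℝ)) :
    ∀ i, 1 ≤ i → i ≤ n → x ∉ polyP k n hk i :=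
  interior_polyP_zero_disjoint_general k n hk x hΔ hstrict
end
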